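/- arXiv:0808.3037 — 3 statements merged into one kernel-verified Lean document; each statement's English description precedes it below -/
import Mathlib

section
/- For every n ≥ 1, E[((Σ_{j=1}^n ω_j)² − Σ_{j=1}^n ω_j²)²] = 2n(n−1). Moreover, there is a constant C > 0 such that for all integers n ≥ 1 and m ≥ 2, E[|(Σ_{j=1}^n ω_j)² − Σ_{j=1}^n ω_j²|^m] ≤ m! (C n(n−1))^{m/2}. -/
/-!
Write `S = ∑ ω_j` and `Q = ∑ ω_j²`. Adding a charge `X` independent of the previous ones changes
`S² - Q` by `2 X S`; as `X` is centred with unit variance and independent of `(S, Q)`, the second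
moment of `S² - Q` grows by `4 E[S²] = 4n`, and these increments sum to `2n(n-1)`.

For the higher moments, symmetry and the integrability of `exp (λ₀ ω²)` make every charge
sub-Gaussian (for small `t` compare `cosh (t x) ≤ exp (t² x² / 2)` with `exp (λ₀ x²)` by convexity,
for large `t` use `t x ≤ t² / (4λ₀) + λ₀ x²`), so `S` is sub-Gaussian with variance proxy of
order `n`. A sub-Gaussian `X` with variance proxy `c` has `E[X^(2m)] ≤ m! (4 e c)^m`, and
`|S² - Q|^m ≤ 2^(m-1) (S^(2m) + n^(m-1) ∑ ω_j^(2m))` then gives `E|S² - Q|^m ≤ m! (8 e c n)^m`,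
which is at most `m! (C n (n-1))^(m/2)` once `n ≥ 2`; for `n = 1`, `S² - Q` vanishes.
-/

open MeasureTheory ProbabilityTheory Filter Real Finset
open scoped NNReal Nat

namespace ProbabilityTheory

variable {Ω ι : Type*} [MeasurableSpace Ω] {μ : Measure Ω}

lemma IndepFun.memLp_two_mul [IsFiniteMeasure μ] {X B : Ω → ℝ} (hXB : IndepFun X B μ)
    (hX : MemLp X 2 μ) (hB : MemLp B 2 μ) : MemLp (X * B) 2 μ := by
  have hind : IndepFun (fun ω ↦ X ω ^ 2) (fun ω ↦ B ω ^ 2) μ :=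
    hXB.comp (measurable_id.pow_const 2) (measurable_id.pow_const 2)
  refine (memLp_two_iff_integrable_sq (hX.1.mul hB.1)).2 <|
    (hind.integrable_mul hX.integrable_sq hB.integrable_sq).congr (ae_of_all _ fun ω ↦ ?_)
  simp only [Pi.mul_apply, mul_pow]

lemma IndepFun.integral_add_mul_sq [IsFiniteMeasure μ] {X A B : Ω → ℝ}
    (hXAB : IndepFun X (fun ω ↦ (A ω, B ω)) μ) (hX : MemLp X 2 μ) (hA : MemLp A 2 μ)
    (hB : MemLp B 2 μ) (hX0 : ∫ ω, X ω ∂μ = 0) (hX2 : ∫ ω, X ω ^ 2 ∂μ = 1) :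
    ∫ ω, (A ω + X ω * B ω) ^ 2 ∂μ = ∫ ω, A ω ^ 2 ∂μ + ∫ ω, B ω ^ 2 ∂μ := by
  have hXAB' : IndepFun X (fun ω ↦ A ω * B ω) μ :=
    hXAB.comp measurable_id (measurable_fst.mul measurable_snd)
  have hXB2 : IndepFun (fun ω ↦ X ω ^ 2) (fun ω ↦ B ω ^ 2) μ :=
    hXAB.comp (measurable_id.pow_const 2) (measurable_snd.pow_const 2)
  have hcross : Integrable (fun ω ↦ X ω * (A ω * B ω)) μ :=
    hXAB'.integrable_mul (hX.integrable one_le_two) (hA.integrable_mul hB)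
  have hsq : Integrable (fun ω ↦ X ω ^ 2 * B ω ^ 2) μ :=
    hXB2.integrable_mul hX.integrable_sq hB.integrable_sq
  have hfirst : Integrable (fun ω ↦ A ω ^ 2 + 2 * (X ω * (A ω * B ω))) μ :=
    hA.integrable_sq.add (hcross.const_mul 2)
  calc ∫ ω, (A ω + X ω * B ω) ^ 2 ∂μ
      = ∫ ω, A ω ^ 2 + 2 * (X ω * (A ω * B ω)) + X ω ^ 2 * B ω ^ 2 ∂μ := by
        congr with ω; ring
    _ = ∫ ω, A ω ^ 2 ∂μ + 2 * ((∫ ω, X ω ∂μ) * ∫ ω, A ω * B ω ∂μ)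
          + (∫ ω, X ω ^ 2 ∂μ) * ∫ ω, B ω ^ 2 ∂μ := by
        rw [integral_add hfirst hsq,
          integral_add hA.integrable_sq (hcross.const_mul 2), integral_const_mul,
          hXAB'.integral_fun_mul_eq_mul_integral hX.1 (hA.1.mul hB.1),
          hXB2.integral_fun_mul_eq_mul_integral (hX.1.pow 2) (hB.1.pow 2)]
    _ = ∫ ω, A ω ^ 2 ∂μ + ∫ ω, B ω ^ 2 ∂μ := by rw [hX0, hX2]; ring

lemma iIndepFun.indepFun_sum_sum_sq {W : ι → Ω → ℝ} (hind : iIndepFun W μ)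
    (hW : ∀ i, Measurable (W i)) {s : Finset ι} {j : ι} (hj : j ∉ s) :
    IndepFun (W j) (fun ω ↦ (∑ i ∈ s, W i ω, ∑ i ∈ s, W i ω ^ 2)) μ := by
  have hblock := hind.indepFun_finset {j} s (disjoint_singleton_left.2 hj) hW
  have hψ : Measurable fun v : s → ℝ ↦ (∑ i, v i, ∑ i, v i ^ 2) :=
    (Finset.measurable_sum _ fun i _ ↦ measurable_pi_apply i).prodMk
      (Finset.measurable_sum _ fun i _ ↦ (measurable_pi_apply i).pow_const 2)
  convert hblock.comp (measurable_pi_apply (⟨j, mem_singleton_self j⟩ : ({j} : Finset ι))) hψ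
    using 1 <;> funext ω
  · rfl
  · simp only [Function.comp_apply]
    rw [Finset.sum_coe_sort s (W · ω), Finset.sum_coe_sort s (W · ω ^ 2)]

end ProbabilityTheory

section SecondMoment

variable {Ω ι : Type*} [MeasurableSpace Ω] {μ : Measure Ω} {W : ι → Ω → ℝ}

lemma integral_sq_sum_eq_card (hW : ∀ i, Measurable (W i)) (hind : iIndepFun W μ)
    (hL2 : ∀ i, MemLp (W i) 2 μ) (h0 : ∀ i, ∫ ω, W i ω ∂μ = 0)
    (h1 : ∀ i, ∫ ω, W i ω ^ 2 ∂μ = 1) (s : Finset ι) :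
    ∫ ω, (∑ j ∈ s, W j ω) ^ 2 ∂μ = #s := by
  classical
  have := hind.isProbabilityMeasure
  induction s using Finset.induction_on with
  | empty => simp
  | insert j s hj ih =>
    have hindj : IndepFun (W j) (fun ω ↦ (∑ i ∈ s, W i ω, (1 : ℝ))) μ :=
      (hind.indepFun_sum_sum_sq hW hj).comp measurable_id (measurable_fst.prodMk measurable_const)
    calc ∫ ω, (∑ i ∈ insert j s, W i ω) ^ 2 ∂μ
        = ∫ ω, (∑ i ∈ s, W i ω + W j ω * 1) ^ 2 ∂μ := by
          simp only [sum_insert hj, mul_one, add_comm]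
      _ = #(insert j s) := by
          rw [hindj.integral_add_mul_sq (hL2 j) (memLp_finsetSum s fun i _ ↦ hL2 i)
            (memLp_const 1) (h0 j) (h1 j), ih, card_insert_of_notMem hj]
          simp

theorem integral_sq_sum_sub_sum_sq_sq (hW : ∀ i, Measurable (W i))
    (hind : iIndepFun W μ) (hL2 : ∀ i, MemLp (W i) 2 μ) (h0 : ∀ i, ∫ ω, W i ω ∂μ = 0)
    (h1 : ∀ i, ∫ ω, W i ω ^ 2 ∂μ = 1) (s : Finset ι) :
    ∫ ω, ((∑ j ∈ s, W j ω) ^ 2 - ∑ j ∈ s, W j ω ^ 2) ^ 2 ∂μ = 2 * #s * (#s - 1) := by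
  classical
  have := hind.isProbabilityMeasure
  suffices MemLp (fun ω ↦ (∑ j ∈ s, W j ω) ^ 2 - ∑ j ∈ s, W j ω ^ 2) 2 μ ∧
      ∫ ω, ((∑ j ∈ s, W j ω) ^ 2 - ∑ j ∈ s, W j ω ^ 2) ^ 2 ∂μ = 2 * #s * (#s - 1) from this.2
  induction s using Finset.induction_on with
  | empty => simp
  | insert j s hj ih =>
    have hY : ∀ ω, (∑ i ∈ insert j s, W i ω) ^ 2 - ∑ i ∈ insert j s, W i ω ^ 2
        = ((∑ i ∈ s, W i ω) ^ 2 - ∑ i ∈ s, W i ω ^ 2) + W j ω * (2 * ∑ i ∈ s, W i ω) := by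
      intro ω
      simp only [sum_insert hj]
      ring
    have hindj : IndepFun (W j) (fun ω ↦
        ((∑ i ∈ s, W i ω) ^ 2 - ∑ i ∈ s, W i ω ^ 2, 2 * ∑ i ∈ s, W i ω)) μ :=
      (hind.indepFun_sum_sum_sq hW hj).comp measurable_id
        (((measurable_fst.pow_const 2).sub measurable_snd).prodMk (measurable_fst.const_mul 2))
    have hS : MemLp (fun ω ↦ 2 * ∑ i ∈ s, W i ω) 2 μ :=
      (memLp_finsetSum s fun i _ ↦ hL2 i).const_mul 2
    simp only [hY]
    refine ⟨ih.1.add ((hindj.comp measurable_id measurable_snd).memLp_two_mul (hL2 j) hS), ?_⟩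
    rw [hindj.integral_add_mul_sq (hL2 j) ih.1 hS (h0 j) (h1 j), ih.2]
    simp only [mul_pow, integral_const_mul, integral_sq_sum_eq_card hW hind hL2 h0 h1,
      card_insert_of_notMem hj]
    push_cast
    ring

end SecondMoment

lemma mul_le_sq_div_add_mul_sq {l : ℝ} (hl : 0 < l) (t x : ℝ) :
    t * x ≤ t ^ 2 / (4 * l) + l * x ^ 2 := by
  have key : t ^ 2 / (4 * l) + l * x ^ 2 - t * x = (t - 2 * l * x) ^ 2 / (4 * l) := by
    field_simp; ring
  have : 0 ≤ (t - 2 * l * x) ^ 2 / (4 * l) := by positivity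
  linarith

section SquareExponentialMoment

variable {Ω : Type*} [MeasurableSpace Ω] {μ : Measure Ω} {X : Ω → ℝ} {l : ℝ}

lemma integrable_exp_mul_of_integrable_exp_mul_sq (hX : AEMeasurable X μ) (hl : 0 < l)
    (hint : Integrable (fun ω ↦ exp (l * X ω ^ 2)) μ) (t : ℝ) :
    Integrable (fun ω ↦ exp (t * X ω)) μ := by
  refine (hint.const_mul (exp (t ^ 2 / (4 * l)))).mono' (by fun_prop) (ae_of_all _ fun ω ↦ ?_)
  rw [norm_of_nonneg (exp_pos _).le, ← exp_add]
  exact exp_le_exp.2 (mul_le_sq_div_add_mul_sq hl t (X ω))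

lemma integral_eq_zero_of_identDistrib_neg (h : IdentDistrib X (-X) μ μ) : ∫ ω, X ω ∂μ = 0 := by
  have := h.integral_eq
  simp only [Pi.neg_apply, integral_neg] at this
  linarith

lemma one_le_integral_exp_mul_sq [IsProbabilityMeasure μ] (hl : 0 ≤ l)
    (hint : Integrable (fun ω ↦ exp (l * X ω ^ 2)) μ) :
    1 ≤ ∫ ω, exp (l * X ω ^ 2) ∂μ := by
  simpa using integral_mono (integrable_const 1) hint fun ω ↦ one_le_exp (by positivity)

lemma mgf_le_one_add_mul_of_sq_le [IsProbabilityMeasure μ] (hsymm : IdentDistrib X (-X) μ μ)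
    (hl : 0 < l) (hint : Integrable (fun ω ↦ exp (l * X ω ^ 2)) μ) {t : ℝ} (ht : t ^ 2 ≤ 2 * l) :
    mgf X μ t ≤ 1 + t ^ 2 / (2 * l) * ((∫ ω, exp (l * X ω ^ 2) ∂μ) - 1) := by
  set θ := t ^ 2 / (2 * l)
  have hθ : θ ≤ 1 := (div_le_one (by positivity)).2 ht
  have hexp := integrable_exp_mul_of_integrable_exp_mul_sq hsymm.aemeasurable_fst hl hint
  have hcosh_int : Integrable (fun ω ↦ cosh (t * X ω)) μ := by
    simpa only [cosh_eq, neg_mul, Pi.add_apply] using ((hexp t).add (hexp (-t))).div_const 2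
  have hcosh : mgf X μ t = ∫ ω, cosh (t * X ω) ∂μ := by
    have hneg : mgf X μ (-t) = mgf X μ t := by
      rw [← mgf_neg, ← mgf_congr_identDistrib hsymm]
    unfold mgf at hneg ⊢
    simp only [cosh_eq, integral_div, ← neg_mul]
    rw [integral_add (hexp t) (hexp (-t)), hneg]
    ring
  have hpt : ∀ ω, cosh (t * X ω) ≤ 1 - θ + θ * exp (l * X ω ^ 2) := by
    intro ω
    have hconv := convexOn_exp.2 (Set.mem_univ (l * X ω ^ 2)) (Set.mem_univ 0)
      (by positivity : 0 ≤ θ) (by linarith : 0 ≤ 1 - θ) (by ring)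
    calc cosh (t * X ω) ≤ exp ((t * X ω) ^ 2 / 2) := cosh_le_exp_half_sq _
      _ = exp (θ • (l * X ω ^ 2) + (1 - θ) • 0) := by
        congr 1; simp only [θ, smul_eq_mul, mul_zero, add_zero]; field_simp
      _ ≤ 1 - θ + θ * exp (l * X ω ^ 2) := by
        simpa [smul_eq_mul, add_comm] using hconv
  calc mgf X μ t = ∫ ω, cosh (t * X ω) ∂μ := hcosh
    _ ≤ ∫ ω, 1 - θ + θ * exp (l * X ω ^ 2) ∂μ :=
      integral_mono hcosh_int ((integrable_const _).add (hint.const_mul θ)) hpt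
    _ = 1 + θ * ((∫ ω, exp (l * X ω ^ 2) ∂μ) - 1) := by
      rw [integral_add (integrable_const _) (hint.const_mul θ), integral_const_mul]
      simp only [integral_const, probReal_univ, smul_eq_mul, one_mul]
      ring

lemma mgf_le_exp_mul_integral (hX : AEMeasurable X μ) (hl : 0 < l)
    (hint : Integrable (fun ω ↦ exp (l * X ω ^ 2)) μ) (t : ℝ) :
    mgf X μ t ≤ exp (t ^ 2 / (4 * l)) * ∫ ω, exp (l * X ω ^ 2) ∂μ := by
  rw [← integral_const_mul]
  refine integral_mono (integrable_exp_mul_of_integrable_exp_mul_sq hX hl hint t)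
    (hint.const_mul _) fun ω ↦ ?_
  rw [← exp_add]
  exact exp_le_exp.2 (mul_le_sq_div_add_mul_sq hl t (X ω))

lemma mgf_le_of_integrable_exp_mul_sq [IsProbabilityMeasure μ] (hsymm : IdentDistrib X (-X) μ μ)
    (hl : 0 < l) (hint : Integrable (fun ω ↦ exp (l * X ω ^ 2)) μ) (t : ℝ) :
    mgf X μ t ≤ exp ((∫ ω, exp (l * X ω ^ 2) ∂μ) / l * t ^ 2 / 2) := by
  set K := ∫ ω, exp (l * X ω ^ 2) ∂μ
  have hK : 1 ≤ K := one_le_integral_exp_mul_sq hl.le hint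
  set u := t ^ 2 / (2 * l)
  have hKu : K / l * t ^ 2 / 2 = K * u := by simp only [u]; field_simp
  rcases le_total (t ^ 2) (2 * l) with hsmall | hlarge
  · calc mgf X μ t ≤ 1 + u * (K - 1) := mgf_le_one_add_mul_of_sq_le hsymm hl hint hsmall
      _ ≤ exp (u * (K - 1)) := by linarith [add_one_le_exp (u * (K - 1))]
      _ ≤ exp (K / l * t ^ 2 / 2) := by
        rw [hKu]
        exact exp_le_exp.2 (by nlinarith [show 0 ≤ u by positivity])
  · have hu : 1 ≤ u := (one_le_div (by positivity)).2 hlarge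
    calc mgf X μ t ≤ exp (t ^ 2 / (4 * l)) * K :=
          mgf_le_exp_mul_integral hsymm.aemeasurable_fst hl hint t
      _ ≤ exp (u / 2) * exp (K - 1) := by
        rw [show t ^ 2 / (4 * l) = u / 2 by simp only [u]; field_simp; ring]
        gcongr
        linarith [add_one_le_exp (K - 1)]
      _ ≤ exp (K / l * t ^ 2 / 2) := by
        rw [← exp_add, hKu]
        exact exp_le_exp.2 (by nlinarith)

lemma exists_hasSubgaussianMGF_of_integrable_exp_mul_sq [IsProbabilityMeasure μ]
    (hsymm : IdentDistrib X (-X) μ μ) (hl : 0 < l)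
    (hint : Integrable (fun ω ↦ exp (l * X ω ^ 2)) μ) :
    ∃ c : ℝ≥0, 0 < c ∧ HasSubgaussianMGF X c μ := by
  have hK := one_le_integral_exp_mul_sq hl.le hint
  refine ⟨⟨(∫ ω, exp (l * X ω ^ 2) ∂μ) / l, div_nonneg (by linarith) hl.le⟩,
    NNReal.coe_pos.1 (div_pos (by linarith) hl), ⟨?_, ?_⟩⟩
  · exact integrable_exp_mul_of_integrable_exp_mul_sq hsymm.aemeasurable_fst hl hint
  · exact mgf_le_of_integrable_exp_mul_sq hsymm hl hint

end SquareExponentialMoment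

lemma pow_two_mul_le_factorial_div_mul_exp_add_exp {t : ℝ} (ht : 0 < t) (m : ℕ) (x : ℝ) :
    x ^ (2 * m) ≤ (2 * m)! / t ^ (2 * m) * (exp (t * x) + exp (-(t * x))) := by
  have hexp : exp |t * x| ≤ exp (t * x) + exp (-(t * x)) := by
    rcases abs_cases (t * x) with ⟨h, -⟩ | ⟨h, -⟩ <;> rw [h] <;>
      linarith [exp_pos (t * x), exp_pos (-(t * x))]
  rw [div_mul_eq_mul_div, le_div_iff₀ (by positivity)]
  calc x ^ (2 * m) * t ^ (2 * m) = |t * x| ^ (2 * m) := by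
        rw [(even_two_mul m).pow_abs, mul_pow, mul_comm]
    _ ≤ (2 * m)! * exp |t * x| := by
        rw [← div_le_iff₀' (by positivity)]
        exact pow_div_factorial_le_exp _ (abs_nonneg _) _
    _ ≤ (2 * m)! * (exp (t * x) + exp (-(t * x))) := by gcongr

lemma two_mul_factorial_two_mul_le (m : ℕ) (hm : m ≠ 0) :
    2 * (2 * m)! ≤ 8 ^ m * m ! * m ^ m := by
  have hcentral : (2 * m)! = (2 * m).choose m * m ! * m ! := by
    rw [← Nat.choose_mul_factorial_mul_factorial (by omega : m ≤ 2 * m),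
      show 2 * m - m = m by omega]
  have hchoose : (2 * m).choose m ≤ 4 ^ m := by
    simpa [Nat.centralBinom_eq_two_mul_choose] using Nat.centralBinom_le_four_pow m
  have htwo : 2 ≤ 2 ^ m := Nat.le_self_pow hm 2
  calc 2 * (2 * m)! ≤ 2 ^ m * (4 ^ m * m ! * m ^ m) := by
        rw [hcentral]
        gcongr
        exact Nat.factorial_le_pow m
    _ = 8 ^ m * m ! * m ^ m := by
        rw [show (8 : ℕ) = 2 * 4 by rfl, mul_pow]; ring

namespace ProbabilityTheory.HasSubgaussianMGF

variable {Ω : Type*} [MeasurableSpace Ω] {μ : Measure Ω} {X : Ω → ℝ} {c : ℝ≥0}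

lemma integrable_pow [IsFiniteMeasure μ] (h : HasSubgaussianMGF X c μ) (n : ℕ) :
    Integrable (fun ω ↦ X ω ^ n) μ :=
  (h.memLp n).integrable_norm_pow'.mono' (h.aestronglyMeasurable.pow n)
    (ae_of_all _ fun _ ↦ (norm_pow _ _).le)

lemma integral_pow_two_mul_le [IsFiniteMeasure μ] (h : HasSubgaussianMGF X c μ) {m : ℕ}
    (hm : m ≠ 0) :
    ∫ ω, X ω ^ (2 * m) ∂μ ≤ m ! * (4 * exp 1 * c) ^ m := by
  rcases eq_zero_or_pos c with rfl | hc
  · have hzero : (fun ω ↦ X ω ^ (2 * m)) =ᵐ[μ] 0 := by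
      filter_upwards [h.ae_eq_zero_of_hasSubgaussianMGF_zero] with ω hω
      simp [hω, hm]
    simp [integral_congr_ae hzero, hm]
  -- `t² = 2m / c` balances the factor `t^(-2m)` against `exp (c t² / 2)`
  set t := √(2 * m / c)
  have ht : 0 < t := by positivity
  have ht2 : t ^ 2 = 2 * m / c := sq_sqrt (by positivity)
  have hc' : (c : ℝ) ≠ 0 := by positivity
  have hm' : (m : ℝ) ≠ 0 := by exact_mod_cast hm
  have hmgf : ∀ s : ℝ, s ^ 2 = t ^ 2 → ∫ ω, exp (s * X ω) ∂μ ≤ exp m := fun s hs ↦ by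
    refine (h.mgf_le s).trans (le_of_eq ?_)
    rw [hs, ht2]; field_simp
  calc ∫ ω, X ω ^ (2 * m) ∂μ
      ≤ ∫ ω, (2 * m)! / t ^ (2 * m) * (exp (t * X ω) + exp (-t * X ω)) ∂μ := by
        refine integral_mono (h.integrable_pow _)
          (((h.integrable_exp_mul t).add (h.integrable_exp_mul (-t))).const_mul _) fun ω ↦ ?_
        simpa only [neg_mul] using pow_two_mul_le_factorial_div_mul_exp_add_exp ht m (X ω)
    _ ≤ (2 * m)! / t ^ (2 * m) * (exp m + exp m) := by
        rw [integral_const_mul, integral_add (h.integrable_exp_mul t) (h.integrable_exp_mul (-t))]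
        gcongr
        · exact hmgf t rfl
        · exact hmgf (-t) (neg_sq t)
    _ = 2 * (2 * m)! * (exp 1 * c / (2 * m)) ^ m := by
        rw [pow_mul, ht2, ← exp_one_pow, div_pow, div_pow, mul_pow, mul_pow]
        field_simp
        ring
    _ ≤ 8 ^ m * m ! * m ^ m * (exp 1 * c / (2 * m)) ^ m :=
        mul_le_mul_of_nonneg_right (by exact_mod_cast two_mul_factorial_two_mul_le m hm)
          (by positivity)
    _ = m ! * (4 * exp 1 * c) ^ m := by
        rw [div_pow, mul_pow 2, mul_pow, mul_pow, show (8 : ℝ) = 4 * 2 by norm_num, mul_pow]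
        field_simp
        ring

end ProbabilityTheory.HasSubgaussianMGF

lemma abs_sq_sum_sub_sum_sq_pow_le {ι : Type*} (s : Finset ι) (x : ι → ℝ) (m : ℕ) :
    |(∑ j ∈ s, x j) ^ 2 - ∑ j ∈ s, x j ^ 2| ^ (m + 1)
      ≤ 2 ^ m * ((∑ j ∈ s, x j) ^ (2 * (m + 1)) + #s ^ m * ∑ j ∈ s, x j ^ (2 * (m + 1))) := by
  have hQ : 0 ≤ ∑ j ∈ s, x j ^ 2 := sum_nonneg fun j _ ↦ sq_nonneg _
  calc |(∑ j ∈ s, x j) ^ 2 - ∑ j ∈ s, x j ^ 2| ^ (m + 1)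
      ≤ ((∑ j ∈ s, x j) ^ 2 + ∑ j ∈ s, x j ^ 2) ^ (m + 1) := by
        gcongr
        exact (abs_sub _ _).trans_eq (by rw [abs_of_nonneg (sq_nonneg _), abs_of_nonneg hQ])
    _ ≤ 2 ^ m * (((∑ j ∈ s, x j) ^ 2) ^ (m + 1) + (∑ j ∈ s, x j ^ 2) ^ (m + 1)) :=
        add_pow_le (sq_nonneg _) hQ (m + 1)
    _ ≤ 2 ^ m * ((∑ j ∈ s, x j) ^ (2 * (m + 1)) + #s ^ m * ∑ j ∈ s, x j ^ (2 * (m + 1))) := by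
        rw [← pow_mul]
        gcongr
        simpa only [← pow_mul] using pow_sum_le_card_mul_sum_pow (fun j _ ↦ sq_nonneg (x j)) m

lemma pow_le_rpow_two_mul_sq_mul_mul_sub_one {a n : ℝ} (ha : 0 ≤ a) (hn : 2 ≤ n) (m : ℕ) :
    (a * n) ^ m ≤ (2 * a ^ 2 * n * (n - 1)) ^ ((m : ℝ) / 2) := by
  calc (a * n) ^ m = ((a * n) ^ 2) ^ ((m : ℝ) / 2) := by
        rw [← rpow_natCast (a * n) 2, ← rpow_mul (by positivity), ← rpow_natCast]
        congr 1
        push_cast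
        ring
    _ ≤ (2 * a ^ 2 * n * (n - 1)) ^ ((m : ℝ) / 2) := by
        gcongr
        nlinarith [mul_nonneg (mul_nonneg (sq_nonneg a) (by linarith : 0 ≤ n))
          (by linarith : 0 ≤ n - 2)]

section HigherMoments

variable {Ω ι : Type*} [MeasurableSpace Ω] {μ : Measure Ω} {W : ι → Ω → ℝ}

theorem integral_abs_sq_sum_sub_sum_sq_pow_le (hind : iIndepFun W μ) {c : ℝ≥0}
    (hW : ∀ i, HasSubgaussianMGF (W i) c μ) (s : Finset ι) {m : ℕ} (hm : m ≠ 0) :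
    ∫ ω, |(∑ j ∈ s, W j ω) ^ 2 - ∑ j ∈ s, W j ω ^ 2| ^ m ∂μ
      ≤ m ! * (8 * exp 1 * c * #s) ^ m := by
  have := hind.isProbabilityMeasure
  obtain ⟨m, rfl⟩ := Nat.exists_eq_add_one_of_ne_zero hm
  have hS : HasSubgaussianMGF (fun ω ↦ ∑ j ∈ s, W j ω) (#s * c) μ := by
    simpa only [sum_const, nsmul_eq_mul] using
      HasSubgaussianMGF.sum_of_iIndepFun hind fun j _ ↦ hW j
  have hsum : Integrable (fun ω ↦ ∑ j ∈ s, W j ω ^ (2 * (m + 1))) μ :=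
    integrable_finsetSum _ fun j _ ↦ (hW j).integrable_pow _
  have hint : Integrable (fun ω ↦ (∑ j ∈ s, W j ω) ^ (2 * (m + 1))
      + #s ^ m * ∑ j ∈ s, W j ω ^ (2 * (m + 1))) μ :=
    (hS.integrable_pow _).add (hsum.const_mul _)
  calc ∫ ω, |(∑ j ∈ s, W j ω) ^ 2 - ∑ j ∈ s, W j ω ^ 2| ^ (m + 1) ∂μ
      ≤ ∫ ω, 2 ^ m * ((∑ j ∈ s, W j ω) ^ (2 * (m + 1))
          + #s ^ m * ∑ j ∈ s, W j ω ^ (2 * (m + 1))) ∂μ :=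
        integral_mono_of_nonneg (ae_of_all _ fun _ ↦ by positivity) (hint.const_mul _)
          (ae_of_all _ fun ω ↦ abs_sq_sum_sub_sum_sq_pow_le s (W · ω) m)
    _ = 2 ^ m * (∫ ω, (∑ j ∈ s, W j ω) ^ (2 * (m + 1)) ∂μ
          + #s ^ m * ∑ j ∈ s, ∫ ω, W j ω ^ (2 * (m + 1)) ∂μ) := by
        rw [integral_const_mul, integral_add (hS.integrable_pow _) (hsum.const_mul _),
          integral_const_mul, integral_finsetSum _ fun j _ ↦ (hW j).integrable_pow _]
    _ ≤ 2 ^ m * ((m + 1)! * (4 * exp 1 * (#s * c)) ^ (m + 1)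
          + #s ^ m * ∑ j ∈ s, (m + 1)! * (4 * exp 1 * c) ^ (m + 1)) := by
        gcongr with j
        · exact_mod_cast hS.integral_pow_two_mul_le hm
        · exact (hW j).integral_pow_two_mul_le hm
    _ = (m + 1)! * (8 * exp 1 * c * #s) ^ (m + 1) := by
        rw [sum_const, nsmul_eq_mul,
          show (8 * exp 1 * c * #s : ℝ) = 2 * (4 * exp 1 * (#s * c)) by ring, mul_pow (2 : ℝ)]
        ring

end HigherMoments

/-- **Moment identities for i.i.d. symmetric charges (Lemma 2.1).**
`E[((Σ ω_j)² − Σ ω_j²)²] = 2n(n−1)` and, for some `C > 0`,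
`E[|(Σ ω_j)² − Σ ω_j²|^m] ≤ m! (C n(n−1))^{m/2}` for all `n ≥ 1`, `m ≥ 2`. -/
theorem charge_chaos_moment_bounds
    {Ω : Type*} [MeasurableSpace Ω] (μ : Measure Ω) [IsProbabilityMeasure μ]
    (W : ℕ → Ω → ℝ)
    (hWmeas : ∀ i, Measurable (W i))
    (hWindep : iIndepFun W μ)
    (hWident : ∀ i, Measure.map (W i) μ = Measure.map (W 1) μ)
    (hWsymm : Measure.map (W 1) μ = Measure.map (fun ω => -(W 1 ω)) μ)
    (hWmom : ∫ ω, (W 1 ω) ^ 2 ∂μ = 1)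
    (hWexp : ∃ l0 > 0, Integrable (fun ω => Real.exp (l0 * (W 1 ω) ^ 2)) μ) :
    (∀ n : ℕ, 1 ≤ n →
      ∫ ω, ((∑ j ∈ Finset.Icc 1 n, W j ω) ^ 2 - ∑ j ∈ Finset.Icc 1 n, (W j ω) ^ 2) ^ 2 ∂μ
        = 2 * (n : ℝ) * ((n : ℝ) - 1)) ∧
    (∃ C : ℝ, 0 < C ∧ ∀ n m : ℕ, 1 ≤ n → 2 ≤ m →
      ∫ ω, |(∑ j ∈ Finset.Icc 1 n, W j ω) ^ 2 - ∑ j ∈ Finset.Icc 1 n, (W j ω) ^ 2| ^ m ∂μ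
        ≤ (m.factorial : ℝ) * (C * (n : ℝ) * ((n : ℝ) - 1)) ^ ((m : ℝ) / 2)) := by
  obtain ⟨l, hl, hexp⟩ := hWexp
  have hid : ∀ i, IdentDistrib (W i) (W 1) μ μ := fun i ↦
    ⟨(hWmeas i).aemeasurable, (hWmeas 1).aemeasurable, hWident i⟩
  have hsymm : IdentDistrib (W 1) (-W 1) μ μ :=
    ⟨(hWmeas 1).aemeasurable, (hWmeas 1).neg.aemeasurable, hWsymm⟩
  obtain ⟨c, hc, hsub1⟩ := exists_hasSubgaussianMGF_of_integrable_exp_mul_sq hsymm hl hexp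
  have hsub : ∀ i, HasSubgaussianMGF (W i) c μ := fun i ↦ hsub1.congr_identDistrib (hid i).symm
  have hmean : ∀ i, ∫ ω, W i ω ∂μ = 0 := fun i ↦
    (hid i).integral_eq.trans (integral_eq_zero_of_identDistrib_neg hsymm)
  have hvar : ∀ i, ∫ ω, W i ω ^ 2 ∂μ = 1 := fun i ↦
    ((hid i).comp (measurable_id.pow_const 2)).integral_eq.trans hWmom
  refine ⟨fun n _ ↦ ?_, 2 * (8 * exp 1 * c) ^ 2, by positivity, fun n m hn hm ↦ ?_⟩
  · have hL2 : ∀ i, MemLp (W i) 2 μ := fun i ↦ by simpa using (hsub i).memLp 2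
    simpa using integral_sq_sum_sub_sum_sq_sq hWmeas hWindep hL2 hmean hvar (Icc 1 n)
  rcases hn.eq_or_lt with rfl | hn
  · simp only [Icc_self, sum_singleton, sub_self, abs_zero, zero_pow (by omega : m ≠ 0),
      integral_zero]
    positivity
  calc _ ≤ m ! * (8 * exp 1 * c * n) ^ m := by
        simpa using integral_abs_sq_sum_sub_sum_sq_pow_le hWindep hsub (Icc 1 n) (by omega : m ≠ 0)
    _ ≤ _ := by
        gcongr
        exact pow_le_rpow_two_mul_sq_mul_mul_sub_one (by positivity) (by exact_mod_cast hn) m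
end

section
/- For all integers m, n ≥ 1 and every truncation level K > 0, E[H̃_n^{2m}] ≥ ((2m)!/(2^{2m} m!)) A_m(n). -/
/-!
Write `E` for the event `sup_x l(n, x) ≤ K`. Expanding
`H̃_n^{2m} = 1_E (∑_{j<k} 1{S_j = S_k} ω_j ω_k)^{2m}` and using the independence of walk and
environment, `E[H̃_n^{2m}]` is a sum, over `2m`-tuples `g` of increasing pairs of times, of
`P(E ∩ {S_j = S_k for every pair (j, k) of g}) · E[∏ ω]`. Every term is nonnegative, since the odd
moments of the symmetric `ω_k` vanish. Keeping only the tuples that use `m` pairs with `2m`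
distinct times, each twice, makes the environment factor `1`; each such `m`-tuple of pairs yields
`(2m)!` tuples `g` through the permutations of the `2m` slots, and a given `g` arises at most
`2^m m!` times. On the other side, `l(y)(l(y) - 1)` is twice the number of pairs `j < k` with
`S_j = S_k = y`, and pairs sitting at distinct sites `y_1, …, y_m` have `2m` distinct times, which
bounds `A_m(n)` by the retained terms.
-/

open MeasureTheory ProbabilityTheory Finset Function Equiv
open scoped Nat

section Moments

variable {Ω : Type*} [MeasurableSpace Ω] {μ : Measure Ω}

lemma abs_pow_le_one_add_pow_two_mul (x : ℝ) (c : ℕ) : |x| ^ c ≤ 1 + x ^ (2 * c) := by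
  have hsq : 0 ≤ x ^ (2 * c) := by rw [pow_mul]; positivity
  rcases le_total |x| 1 with h | h
  · linarith [pow_le_one₀ (abs_nonneg x) h (n := c)]
  · calc |x| ^ c ≤ |x| ^ (2 * c) := pow_le_pow_right₀ h (by omega)
      _ = x ^ (2 * c) := by rw [pow_abs, abs_of_nonneg hsq]
      _ ≤ 1 + x ^ (2 * c) := by linarith

lemma integrable_pow_of_integrable_exp_mul_sq [IsFiniteMeasure μ] {V : Ω → ℝ}
    (hV : Measurable V) {l : ℝ} (hl : 0 < l)
    (h : Integrable (fun ω => Real.exp (l * V ω ^ 2)) μ) (c : ℕ) :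
    Integrable (fun ω => V ω ^ c) μ := by
  have hneg : Integrable (fun ω => Real.exp (-l * V ω ^ 2)) μ := by
    refine Integrable.of_bound (by fun_prop) 1 (ae_of_all _ fun ω => ?_)
    rw [Real.norm_eq_abs, abs_of_pos (Real.exp_pos _), Real.exp_le_one_iff]
    nlinarith [sq_nonneg (V ω)]
  have h2c : Integrable (fun ω => V ω ^ (2 * c)) μ := by
    simpa only [pow_mul] using integrable_pow_of_integrable_exp_mul hl.ne' h hneg c
  refine ((integrable_const 1).add h2c).mono' (by fun_prop) (ae_of_all _ fun ω => ?_)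
  simpa only [norm_pow, Real.norm_eq_abs, Pi.add_apply] using
    abs_pow_le_one_add_pow_two_mul (V ω) c

lemma integral_pow_nonneg_of_identDistrib_neg {V : Ω → ℝ}
    (h : IdentDistrib V (fun ω => -V ω) μ μ) (c : ℕ) : 0 ≤ ∫ ω, V ω ^ c ∂μ := by
  rcases Nat.even_or_odd c with hc | hc
  · exact integral_nonneg fun ω => hc.pow_nonneg _
  · have h' : ∫ ω, V ω ^ c ∂μ = ∫ ω, (-V ω) ^ c ∂μ :=
      (h.comp (measurable_id.pow_const c)).integral_eq
    simp only [hc.neg_pow, integral_neg] at h'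
    linarith

lemma ProbabilityTheory.iIndepFun.integrable_finsetProd {ι : Type*} {f : ι → Ω → ℝ}
    (hf : iIndepFun f μ) (hmeas : ∀ i, Measurable (f i)) (hint : ∀ i, Integrable (f i) μ)
    (s : Finset ι) :
    Integrable (fun ω => ∏ i ∈ s, f i ω) μ := by
  classical
  have := hf.isProbabilityMeasure
  induction s using Finset.induction_on with
  | empty => simp
  | insert a s ha ih =>
    simp_rw [prod_insert ha]
    rw [← Finset.prod_fn] at ih
    simpa only [Finset.prod_fn, Pi.mul_def] using
      (hf.indepFun_finsetProd_of_notMem hmeas ha).symm.integrable_mul (hint a) ih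

lemma ProbabilityTheory.iIndepFun.integral_finsetProd {ι : Type*} {f : ι → Ω → ℝ}
    (hf : iIndepFun f μ) (hmeas : ∀ i, Measurable (f i)) (s : Finset ι) :
    ∫ ω, ∏ i ∈ s, f i ω ∂μ = ∏ i ∈ s, ∫ ω, f i ω ∂μ := by
  have := (hf.precomp Subtype.val_injective (g := ((↑) : s → ι)))
    |>.integral_fun_prod_eq_prod_integral fun i => (hmeas i).aestronglyMeasurable
  convert this using 1
  · simp_rw [← prod_coe_sort s]
  · exact (prod_coe_sort s _).symm

variable {ι κ : Type*} [Fintype κ] {W : ι → Ω → ℝ}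

lemma integrable_prod_comp (hW : iIndepFun W μ) (hmeas : ∀ i, Measurable (W i))
    (hint : ∀ i c, Integrable (fun ω => W i ω ^ c) μ) (v : κ → ι) :
    Integrable (fun ω => ∏ z, W (v z) ω) μ := by
  classical
  have hpow : iIndepFun (fun r ω => W r ω ^ #{z | v z = r}) μ :=
    hW.comp (fun r x => x ^ #{z | v z = r}) fun r => measurable_id.pow_const _
  have hregroup (ω : Ω) : ∏ z, W (v z) ω = ∏ r ∈ univ.image v, W r ω ^ #{z | v z = r} :=
    prod_comp (fun i => W i ω) v
  simp_rw [hregroup]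
  exact hpow.integrable_finsetProd (fun r => (hmeas r).pow_const _) (fun r => hint r _) _

lemma integral_prod_comp_nonneg (hW : iIndepFun W μ) (hmeas : ∀ i, Measurable (W i))
    (hmom : ∀ i c, 0 ≤ ∫ ω, W i ω ^ c ∂μ) (v : κ → ι) :
    0 ≤ ∫ ω, ∏ z, W (v z) ω ∂μ := by
  classical
  have hpow : iIndepFun (fun r ω => W r ω ^ #{z | v z = r}) μ :=
    hW.comp (fun r x => x ^ #{z | v z = r}) fun r => measurable_id.pow_const _
  have hregroup (ω : Ω) : ∏ z, W (v z) ω = ∏ r ∈ univ.image v, W r ω ^ #{z | v z = r} :=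
    prod_comp (fun i => W i ω) v
  simp_rw [hregroup]
  rw [hpow.integral_finsetProd fun r => (hmeas r).pow_const _]
  exact prod_nonneg fun r _ => hmom r _

lemma integral_prod_sq_eq_one (hW : iIndepFun W μ) (hmeas : ∀ i, Measurable (W i))
    (hvar : ∀ i, ∫ ω, W i ω ^ 2 ∂μ = 1) {u : κ → ι} (hu : Injective u) :
    ∫ ω, ∏ y, W (u y) ω ^ 2 ∂μ = 1 := by
  have hsq : iIndepFun (fun y ω => W (u y) ω ^ 2) μ :=
    (hW.precomp hu).comp (fun _ x => x ^ 2) fun _ => measurable_id.pow_const 2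
  rw [hsq.integral_finsetProd fun y => (hmeas (u y)).pow_const 2]
  exact prod_eq_one fun y _ => hvar (u y)

lemma tsum_indicator_integral_le_integral {γ : Type*} {s : Set γ} {f : γ → Ω → ℝ} {F : Ω → ℝ}
    (hF : Integrable F μ) (hmeas : ∀ y ∈ s, AEStronglyMeasurable (f y) μ)
    (hnonneg : ∀ y ω, 0 ≤ f y ω)
    (hbound : ∀ Y : Finset γ, (∀ y ∈ Y, y ∈ s) → ∀ ω, ∑ y ∈ Y, f y ω ≤ F ω) :
    ∑' y, s.indicator (fun y => ∫ ω, f y ω ∂μ) y ≤ ∫ ω, F ω ∂μ := by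
  classical
  have hint (y : γ) (hy : y ∈ s) : Integrable (f y) μ :=
    hF.mono' (hmeas y hy) (ae_of_all _ fun ω => by
      rw [Real.norm_eq_abs, abs_of_nonneg (hnonneg y ω)]
      simpa using hbound {y} (by simpa using hy) ω)
  refine Real.tsum_le_of_sum_le (fun y => Set.indicator_nonneg (fun y _ =>
    integral_nonneg (hnonneg y)) y) fun Y => ?_
  calc ∑ y ∈ Y, s.indicator (fun y => ∫ ω, f y ω ∂μ) y
      = ∑ y ∈ Y with y ∈ s, ∫ ω, f y ω ∂μ := by
        rw [sum_filter]
        simp [Set.indicator_apply]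
    _ = ∫ ω, ∑ y ∈ Y with y ∈ s, f y ω ∂μ :=
        (integral_finsetSum _ fun y hy => hint y (mem_filter.1 hy).2).symm
    _ ≤ ∫ ω, F ω ∂μ :=
        integral_mono (integrable_finsetSum _ fun y hy => hint y (mem_filter.1 hy).2) hF
          fun ω => hbound _ (fun y hy => (mem_filter.1 hy).2) ω

end Moments

section Pairings

lemma Prod.eq_of_fst_eq_of_ne_fin_two {α : Type*} {y y' c : α × Fin 2} (hy : y.1 = c.1)
    (hy' : y'.1 = c.1) (hyc : y ≠ c) (hy'c : y' ≠ c) : y = y' := by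
  have h2 : y.2 ≠ c.2 := fun h => hyc (Prod.ext hy h)
  have h2' : y'.2 ≠ c.2 := fun h => hy'c (Prod.ext hy' h)
  exact Prod.ext (hy.trans hy'.symm) (by omega)

lemma Equiv.Perm.eq_of_apply_symm_zero_eq {ι : Type*} {σ σ' σ₀ : Perm (ι × Fin 2)}
    (hσ : ∀ x y, (σ x).1 = (σ y).1 ↔ (σ₀ x).1 = (σ₀ y).1)
    (hσ' : ∀ x y, (σ' x).1 = (σ' y).1 ↔ (σ₀ x).1 = (σ₀ y).1)
    (h : ∀ t, σ (σ₀.symm (t, 0)) = σ' (σ₀.symm (t, 0))) : σ = σ' := by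
  ext1 x
  set x₀ := σ₀.symm ((σ₀ x).1, 0)
  have hx₀ : (σ₀ x).1 = (σ₀ x₀).1 := by simp [x₀]
  by_cases hx : x = x₀
  · rw [hx]
    exact h _
  refine Prod.eq_of_fst_eq_of_ne_fin_two ((hσ x x₀).2 hx₀) ?_ (fun h => hx (σ.injective h)) ?_
  · rw [h]
    exact (hσ' x x₀).2 hx₀
  · rw [h]
    exact fun h => hx (σ'.injective h)

variable {ι β : Type*} [Fintype ι] [DecidableEq ι]

lemma card_filter_injective_eq_factorial :
    #{π : ι → ι | Injective π} = (Fintype.card ι)! := by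
  rw [← Fintype.card_subtype, Fintype.card_congr (subtypeInjectiveEquivEmbedding ι ι),
    Fintype.card_embedding_eq, Nat.descFactorial_self]

lemma card_pairing_fiber_le [DecidableEq β] {D : Finset (ι → β)} (hD : ∀ e ∈ D, Injective e)
    (g : ι × Fin 2 → β) :
    #{p ∈ D ×ˢ (univ : Finset (Perm (ι × Fin 2))) | (fun i => p.1 (p.2 i).1) = g}
      ≤ (Fintype.card ι)! * 2 ^ Fintype.card ι := by
  set F := {p ∈ D ×ˢ (univ : Finset (Perm (ι × Fin 2))) | (fun i => p.1 (p.2 i).1) = g}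
  obtain hempty | ⟨p₀, hp₀⟩ := F.eq_empty_or_nonempty
  · simp [hempty]
  have hF : ∀ p ∈ F, Injective p.1 ∧ ∀ i, p.1 (p.2 i).1 = g i := fun p hp => by
    simp only [F, mem_filter, mem_product] at hp
    exact ⟨hD _ hp.1.1, congrFun hp.2⟩
  have hsame : ∀ p ∈ F, ∀ x y, (p.2 x).1 = (p.2 y).1 ↔ (p₀.2 x).1 = (p₀.2 y).1 :=
    fun p hp x y => by
      rw [← (hF p hp).1.eq_iff, (hF p hp).2, (hF p hp).2, ← (hF p₀ hp₀).2 x, ← (hF p₀ hp₀).2 y,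
        (hF p₀ hp₀).1.eq_iff]
  -- an element of the fibre is determined by where it sends one slot of each pair of `p₀`
  let q : (ι → β) × Perm (ι × Fin 2) → ι → ι × Fin 2 := fun p t => p.2 (p₀.2.symm (t, 0))
  calc #F ≤ #(({π : ι → ι | Injective π} : Finset (ι → ι)) ×ˢ (univ : Finset (ι → Fin 2))) := by
        refine card_le_card_of_injOn (fun p => (fun t => (q p t).1, fun t => (q p t).2)) ?_ ?_
        · intro p hp
          simp only [mem_coe, mem_product, mem_filter, mem_univ, and_true, true_and]
          intro t t' h
          simpa [q] using (hsame p hp _ _).1 h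
        · intro p hp p' hp' h
          simp only [Prod.mk.injEq] at h
          have hσ : p.2 = p'.2 := Equiv.Perm.eq_of_apply_symm_zero_eq (hsame p hp) (hsame p' hp')
            fun t => Prod.ext (congrFun h.1 t) (congrFun h.2 t)
          refine Prod.ext (funext fun t => ?_) hσ
          have h := (hF p hp).2 (p.2.symm (t, 0))
          have h' := (hF p' hp').2 (p'.2.symm (t, 0))
          simp only [apply_symm_apply] at h h'
          rw [h, h', hσ]
    _ = (Fintype.card ι)! * 2 ^ Fintype.card ι := by
        rw [card_product, card_filter_injective_eq_factorial, card_univ, Fintype.card_fun,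
          Fintype.card_fin]

lemma factorial_mul_sum_le_sum_pairings [DecidableEq β] {D : Finset (ι → β)}
    (hD : ∀ e ∈ D, Injective e) {G : Finset (ι × Fin 2 → β)}
    (hDG : ∀ e ∈ D, ∀ σ : Perm (ι × Fin 2), (fun i => e (σ i).1) ∈ G)
    {T : (ι × Fin 2 → β) → ℝ} (hT : ∀ g ∈ G, 0 ≤ T g) {TD : (ι → β) → ℝ}
    (hTD : ∀ e ∈ D, ∀ σ : Perm (ι × Fin 2), T (fun i => e (σ i).1) = TD e) :
    ((2 * Fintype.card ι)! : ℝ) * ∑ e ∈ D, TD e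
      ≤ (Fintype.card ι)! * 2 ^ Fintype.card ι * ∑ g ∈ G, T g := by
  set P := D ×ˢ (univ : Finset (Perm (ι × Fin 2)))
  let Φ : (ι → β) × Perm (ι × Fin 2) → ι × Fin 2 → β := fun p i => p.1 (p.2 i).1
  calc ((2 * Fintype.card ι)! : ℝ) * ∑ e ∈ D, TD e = ∑ p ∈ P, T (Φ p) := by
        rw [sum_product, mul_sum]
        refine sum_congr rfl fun e he => ?_
        rw [sum_congr rfl fun σ _ => hTD e he σ, sum_const, card_univ, Fintype.card_perm,
          Fintype.card_prod, Fintype.card_fin, nsmul_eq_mul, mul_comm 2]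
    _ = ∑ g ∈ G, ∑ p ∈ P with Φ p = g, T (Φ p) :=
        (sum_fiberwise_of_maps_to (fun p hp => hDG _ (mem_product.1 hp).1 _) _).symm
    _ = ∑ g ∈ G, #{p ∈ P | Φ p = g} * T g := by
        refine sum_congr rfl fun g _ => ?_
        rw [sum_congr rfl fun p hp => by rw [(mem_filter.1 hp).2], sum_const, nsmul_eq_mul]
    _ ≤ ∑ g ∈ G, (Fintype.card ι)! * 2 ^ Fintype.card ι * T g := by
        refine sum_le_sum fun g hg => mul_le_mul_of_nonneg_right ?_ (hT g hg)
        exact_mod_cast card_pairing_fiber_le hD g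
    _ = _ := by rw [mul_sum]

end Pairings

def increasingPairs (n : ℕ) : Finset (ℕ × ℕ) := {p ∈ Icc 1 n ×ˢ Icc 1 n | p.1 < p.2}

def endpoint {κ : Type*} (e : κ → ℕ × ℕ) (z : κ × Fin 2) : ℕ :=
  if z.2 = 0 then (e z.1).1 else (e z.1).2

def disjointPairs (ι : Type*) [Fintype ι] [DecidableEq ι] (n : ℕ) : Finset (ι → ℕ × ℕ) :=
  {e ∈ Fintype.piFinset fun _ : ι => increasingPairs n | Injective (endpoint e)}

section Walks

variable {α κ : Type*}

lemma prod_endpoint [Fintype κ] {M : Type*} [CommMonoid M] (f : ℕ → M) (e : κ → ℕ × ℕ) :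
    ∏ z, f (endpoint e z) = ∏ t, f (e t).1 * f (e t).2 := by
  simp [Fintype.prod_prod_type, Fin.prod_univ_two, endpoint]

lemma prod_endpoint_pairing [Fintype κ] {M : Type*} [CommMonoid M] (f : ℕ → M)
    (e : κ → ℕ × ℕ) (σ : Perm (κ × Fin 2)) :
    ∏ z, f (endpoint (fun i => e (σ i).1) z) = ∏ y, f (endpoint e y) ^ 2 := by
  rw [prod_endpoint, Equiv.prod_comp σ (fun i => f (e i.1).1 * f (e i.1).2), prod_pow,
    prod_endpoint, Fintype.prod_prod_type]
  simp [sq, prod_mul_distrib]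

lemma injective_of_injective_endpoint {e : κ → ℕ × ℕ} (he : Injective (endpoint e)) :
    Injective e := fun t t' h => congrArg Prod.fst (@he (t, 0) (t', 0) (by simp [endpoint, h]))

lemma sum_increasingPairs_eq [DecidableEq α] (s : ℕ → α) (w : ℕ → ℝ) (n : ℕ) :
    ∑ j ∈ Icc 1 n, ∑ k ∈ Icc 1 n, (if j < k ∧ s j = s k then w j * w k else 0)
      = ∑ p ∈ increasingPairs n, if s p.1 = s p.2 then w p.1 * w p.2 else 0 := by
  rw [increasingPairs, sum_filter, sum_product]
  congr! 2 with j _ k _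
  split_ifs <;> simp_all

lemma sum_ite_pow_card_eq_sum_piFinset [DecidableEq α] [Fintype κ] [DecidableEq κ]
    (P : Finset (ℕ × ℕ)) (s : ℕ → α) (w : ℕ → ℝ) :
    (∑ p ∈ P, if s p.1 = s p.2 then w p.1 * w p.2 else 0) ^ Fintype.card κ
      = ∑ g ∈ Fintype.piFinset fun _ : κ => P,
          if ∀ i, s (g i).1 = s (g i).2 then ∏ z, w (endpoint g z) else 0 := by
  rw [← card_univ, ← prod_const, prod_univ_sum]
  refine sum_congr rfl fun g _ => ?_
  rw [prod_ite_zero, prod_endpoint]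
  simp

lemma card_increasingPairs_filter_eq_choose [DecidableEq α] (s : ℕ → α) (n : ℕ) (v : α) :
    #{p ∈ increasingPairs n | s p.1 = v ∧ s p.2 = v} = (#{j ∈ Icc 1 n | s j = v}).choose 2 := by
  rw [← card_product_filter_lt]
  congr 1
  ext p
  simp only [increasingPairs, mem_filter, mem_product]
  tauto

lemma injective_endpoint {e : κ → ℕ × ℕ} (hlt : ∀ t, (e t).1 < (e t).2) {s : ℕ → α}
    (hs : ∀ t, s (e t).1 = s (e t).2) (hinj : Injective fun t => s (e t).1) :
    Injective (endpoint e) := by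
  have hsite : ∀ z, s (endpoint e z) = s (e z.1).1 := fun z => by
    unfold endpoint; split_ifs <;> simp [hs]
  intro z z' h
  have h1 : z.1 = z'.1 := hinj (by simpa only [hsite] using congrArg s h)
  refine Prod.ext h1 ?_
  unfold endpoint at h
  rw [h1] at h
  split_ifs at h <;> have := hlt z'.1 <;> omega

lemma sum_prod_choose_le_card [DecidableEq α] {ι : Type*} [Fintype ι] [DecidableEq ι]
    (s : ℕ → α) (n : ℕ) {Y : Finset (ι → α)} (hY : ∀ y ∈ Y, Injective y) :
    ∑ y ∈ Y, ∏ k, (#{j ∈ Icc 1 n | s j = y k}).choose 2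
      ≤ #{e ∈ disjointPairs ι n | ∀ t, s (e t).1 = s (e t).2} := by
  set closed := {e ∈ Fintype.piFinset fun _ : ι => increasingPairs n | ∀ t, s (e t).1 = s (e t).2}
  have hfibre (y : ι → α) : ∏ k, (#{j ∈ Icc 1 n | s j = y k}).choose 2
      = #{e ∈ closed | (fun k => s (e k).1) = y} := by
    simp_rw [← card_increasingPairs_filter_eq_choose, ← Fintype.card_piFinset]
    congr 1
    ext e
    simp only [closed, Fintype.mem_piFinset, mem_filter, funext_iff]
    grind
  calc ∑ y ∈ Y, ∏ k, (#{j ∈ Icc 1 n | s j = y k}).choose 2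
      = ∑ y ∈ Y, #{e ∈ closed | (fun k => s (e k).1) = y} := sum_congr rfl fun y _ => hfibre y
    _ = #{e ∈ closed | (fun k => s (e k).1) ∈ Y} := sum_card_fiberwise_eq_card_filter _ _ _
    _ ≤ _ := card_le_card fun e he => by
        simp only [closed, disjointPairs, mem_filter, Fintype.mem_piFinset] at he ⊢
        refine ⟨⟨he.1.1, injective_endpoint (fun t => ?_) he.1.2 (hY _ he.2)⟩, he.1.2⟩
        exact (mem_filter.1 (he.1.1 t)).2

end Walks

section RandomWalk

variable {Ω α : Type*}

def localTime [DecidableEq α] (S : ℕ → Ω → α) (n : ℕ) (x : α) (ω : Ω) : ℕ :=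
  #{k ∈ Icc 1 n | S k ω = x}

def collision {κ : Type*} (S : ℕ → Ω → α) (e : κ → ℕ × ℕ) : Set Ω :=
  {ω | ∀ t, S (e t).1 ω = S (e t).2 ω}

lemma collision_pairing {ι : Type*} (S : ℕ → Ω → α) (e : ι → ℕ × ℕ) (σ : Perm (ι × Fin 2)) :
    collision S (fun i => e (σ i).1) = collision S e := by
  ext ω
  exact ⟨fun h t => by simpa using h (σ.symm (t, 0)), fun h i => h _⟩

lemma natCast_mul_sub_one_eq_two_mul_choose (l : ℕ) :
    (l : ℝ) * (l - 1) = 2 * (l.choose 2 : ℕ) := by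
  rw [Nat.cast_choose_two]
  ring

lemma sum_prod_localTime_le [DecidableEq α] {ι : Type*} [Fintype ι] [DecidableEq ι]
    (S : ℕ → Ω → α) (n : ℕ) {Y : Finset (ι → α)} (hY : ∀ y ∈ Y, Injective y) (ω : Ω) :
    ∑ y ∈ Y, ∏ k, ((localTime S n (y k) ω : ℝ) * ((localTime S n (y k) ω : ℝ) - 1))
      ≤ 2 ^ Fintype.card ι * ∑ e ∈ disjointPairs ι n, (collision S e).indicator 1 ω := by
  simp only [natCast_mul_sub_one_eq_two_mul_choose, prod_mul_distrib, prod_const, card_univ,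
    ← mul_sum, Set.indicator_apply, Pi.one_apply, sum_boole, collision, localTime,
    Set.mem_ofPred_eq]
  gcongr
  exact_mod_cast sum_prod_choose_le_card (S · ω) n hY

lemma measurable_comap_of_eq_sum_range {β : Type*} [MeasurableSpace β] [AddCommMonoid β]
    [MeasurableAdd₂ β] {X S : ℕ → Ω → β} (hS : ∀ k ω, S k ω = ∑ i ∈ range k, X (i + 1) ω)
    (k : ℕ) : Measurable[MeasurableSpace.comap (fun ω i => X i ω) inferInstance] (S k) := by
  rw [funext (hS k)]
  exact Finset.measurable_sum _ fun i _ =>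
    (measurable_pi_apply (i + 1)).comp (comap_measurable fun ω i => X i ω)

variable {m : MeasurableSpace Ω} [MeasurableSpace α] {S : ℕ → Ω → α}

lemma measurable_localTime [DecidableEq α] [MeasurableSingletonClass α]
    (hS : ∀ k, Measurable[m] (S k)) (n : ℕ) (x : α) : Measurable[m] (localTime S n x) := by
  have h : localTime S n x = fun ω => ∑ k ∈ Icc 1 n, if S k ω = x then 1 else 0 := by
    ext ω
    exact card_filter _ _
  rw [h]
  exact Finset.measurable_sum _ fun k _ =>
    Measurable.ite (hS k (measurableSet_singleton x)) measurable_const measurable_const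

lemma measurableSet_localTime_le [DecidableEq α] [MeasurableSingletonClass α] [Countable α]
    (hS : ∀ k, Measurable[m] (S k)) (n : ℕ) (K : ℝ) :
    MeasurableSet[m] {ω | ∀ x, (localTime S n x ω : ℝ) ≤ K} := by
  rw [Set.ofPred_forall]
  exact .iInter fun x =>
    measurableSet_le (measurable_from_top.comp (measurable_localTime hS n x)) measurable_const

lemma measurableSet_collision [MeasurableEq α] {κ : Type*} [Countable κ]
    (hS : ∀ k, Measurable[m] (S k)) (e : κ → ℕ × ℕ) : MeasurableSet[m] (collision S e) := by
  rw [collision, Set.ofPred_forall]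
  exact .iInter fun t => measurableSet_eq_fun (hS _) (hS _)

end RandomWalk

section EnergyMoments

variable {Ω α : Type*} {mX : MeasurableSpace Ω} [mΩ : MeasurableSpace Ω] {μ : Measure Ω}

lemma integral_indicator_pow_eq_sum [DecidableEq α] [MeasurableSpace α] [MeasurableEq α]
    {κ : Type*} [Fintype κ] [DecidableEq κ] [Nonempty κ]
    (hmX : mX ≤ mΩ) {W : ℕ → Ω → ℝ}
    (hindep : Indep mX (MeasurableSpace.comap (fun ω i => W i ω) inferInstance) μ)
    (hW : iIndepFun W μ) (hWmeas : ∀ i, Measurable (W i))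
    (hWint : ∀ i c, Integrable (fun ω => W i ω ^ c) μ)
    {S : ℕ → Ω → α} (hS : ∀ k, Measurable[mX] (S k)) {E : Set Ω} (hE : MeasurableSet[mX] E)
    (P : Finset (ℕ × ℕ)) :
    ∫ ω, E.indicator (fun ω => ∑ p ∈ P, if S p.1 ω = S p.2 ω then W p.1 ω * W p.2 ω else 0) ω
        ^ Fintype.card κ ∂μ
      = ∑ g ∈ Fintype.piFinset fun _ : κ => P,
          μ.real (E ∩ collision S g) * ∫ ω, ∏ z, W (endpoint g z) ω ∂μ := by
  have hA (g : κ → ℕ × ℕ) : MeasurableSet[mX] (E ∩ collision S g) :=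
    hE.inter (measurableSet_collision hS g)
  have hpt (ω : Ω) :
      E.indicator (fun ω => ∑ p ∈ P, if S p.1 ω = S p.2 ω then W p.1 ω * W p.2 ω else 0) ω
          ^ Fintype.card κ
        = ∑ g ∈ Fintype.piFinset fun _ : κ => P,
            (E ∩ collision S g).indicator (fun ω => ∏ z, W (endpoint g z) ω) ω := by
    by_cases hω : ω ∈ E
    · rw [Set.indicator_of_mem hω, sum_ite_pow_card_eq_sum_piFinset P (S · ω) (W · ω)]
      refine sum_congr rfl fun g _ => ?_
      classical
      simp [Set.indicator_apply, hω, collision]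
    · simp [hω]
  simp_rw [hpt]
  rw [integral_finsetSum _ fun g _ =>
    (integrable_prod_comp hW hWmeas hWint _).indicator (hmX _ (hA g))]
  refine sum_congr rfl fun g _ => ?_
  rw [integral_indicator (hmX _ (hA g))]
  exact hindep.setIntegral_eq_smul hmX (f := fun w : ℕ → ℝ => ∏ z, w (endpoint g z))
    (measurable_pi_lambda (fun ω i => W i ω) hWmeas).aemeasurable (hA g)
    (Finset.measurable_prod (f := fun z (w : ℕ → ℝ) => w (endpoint g z)) univ
      fun z _ => measurable_pi_apply _).aestronglyMeasurable

lemma factorial_div_mul_sum_le_integral_pow [DecidableEq α] [MeasurableSpace α] [MeasurableEq α]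
    {ι : Type*} [Fintype ι] [DecidableEq ι] [Nonempty ι]
    (hmX : mX ≤ mΩ) {W : ℕ → Ω → ℝ}
    (hindep : Indep mX (MeasurableSpace.comap (fun ω i => W i ω) inferInstance) μ)
    (hW : iIndepFun W μ) (hWmeas : ∀ i, Measurable (W i))
    (hWid : ∀ i, IdentDistrib (W i) (W 1) μ μ)
    (hsymm : IdentDistrib (W 1) (fun ω => -W 1 ω) μ μ) (hvar : ∫ ω, W 1 ω ^ 2 ∂μ = 1)
    (hint : ∀ c, Integrable (fun ω => W 1 ω ^ c) μ)
    {S : ℕ → Ω → α} (hS : ∀ k, Measurable[mX] (S k)) {E : Set Ω} (hE : MeasurableSet[mX] E)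
    (n : ℕ) :
    ((2 * Fintype.card ι)! : ℝ) / (2 ^ Fintype.card ι * (Fintype.card ι)!)
        * ∑ e ∈ disjointPairs ι n, μ.real (E ∩ collision S e)
      ≤ ∫ ω, E.indicator (fun ω => ∑ p ∈ increasingPairs n,
          if S p.1 ω = S p.2 ω then W p.1 ω * W p.2 ω else 0) ω ^ (2 * Fintype.card ι) ∂μ := by
  have hpow (i c : ℕ) : IdentDistrib (fun ω => W i ω ^ c) (fun ω => W 1 ω ^ c) μ μ :=
    (hWid i).comp (measurable_id.pow_const c)
  have hpairs := factorial_mul_sum_le_sum_pairings (D := disjointPairs ι n)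
    (G := Fintype.piFinset fun _ : ι × Fin 2 => increasingPairs n)
    (T := fun g => μ.real (E ∩ collision S g) * ∫ ω, ∏ z, W (endpoint g z) ω ∂μ)
    (TD := fun e => μ.real (E ∩ collision S e))
    (fun e he => injective_of_injective_endpoint (mem_filter.1 he).2)
    (fun e he σ => Fintype.mem_piFinset.2 fun i =>
      Fintype.mem_piFinset.1 (mem_filter.1 he).1 (σ i).1)
    (fun g _ => mul_nonneg measureReal_nonneg (integral_prod_comp_nonneg hW hWmeas
      (fun i c => (hpow i c).integral_eq ▸ integral_pow_nonneg_of_identDistrib_neg hsymm c) _))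
    (fun e he σ => by
      have hsq (ω : Ω) : ∏ z, W (endpoint (fun i => e (σ i).1) z) ω
          = ∏ y, W (endpoint e y) ω ^ 2 := prod_endpoint_pairing (W · ω) e σ
      simp only [collision_pairing, hsq]
      rw [integral_prod_sq_eq_one hW hWmeas (fun i => (hpow i 2).integral_eq.trans hvar)
        (mem_filter.1 he).2, mul_one])
  have hcard : 2 * Fintype.card ι = Fintype.card (ι × Fin 2) := by simp [mul_comm]
  rw [hcard, integral_indicator_pow_eq_sum hmX hindep hW hWmeas
    (fun i c => (hpow i c).integrable_iff.2 (hint c)) hS hE, div_mul_eq_mul_div,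
    div_le_iff₀ (by positivity), ← hcard]
  linarith

lemma inv_two_pow_mul_tsum_integral_le [DecidableEq α] [MeasurableSpace α]
    [MeasurableSingletonClass α] [MeasurableEq α] [IsFiniteMeasure μ]
    {ι : Type*} [Fintype ι] [DecidableEq ι] {S : ℕ → Ω → α} (hS : ∀ k, Measurable (S k))
    {E : Set Ω} (hE : MeasurableSet E) (n : ℕ) :
    (2 : ℝ)⁻¹ ^ Fintype.card ι * ∑' y : ι → α, {y | Injective y}.indicator (fun y =>
        ∫ ω, E.indicator (fun ω =>
          ∏ k, ((localTime S n (y k) ω : ℝ) * ((localTime S n (y k) ω : ℝ) - 1))) ω ∂μ) y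
      ≤ ∑ e ∈ disjointPairs ι n, μ.real (E ∩ collision S e) := by
  have hC (e : ι → ℕ × ℕ) : MeasurableSet (E ∩ collision S e) :=
    hE.inter (measurableSet_collision hS e)
  have hl (x : α) : Measurable fun ω => (localTime S n x ω : ℝ) :=
    measurable_from_top.comp (measurable_localTime hS n x)
  have key := tsum_indicator_integral_le_integral (μ := μ) (s := {y : ι → α | Injective y})
    (f := fun y => E.indicator fun ω =>
      ∏ k, ((localTime S n (y k) ω : ℝ) * ((localTime S n (y k) ω : ℝ) - 1)))
    (F := fun ω =>
      2 ^ Fintype.card ι * ∑ e ∈ disjointPairs ι n, (E ∩ collision S e).indicator 1 ω)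
    ((integrable_finsetSum _ fun e _ => (integrable_const 1).indicator (hC e)).const_mul _)
    (fun y _ => ((Finset.measurable_prod _ fun k _ => (hl _).mul ((hl _).sub_const 1)).indicator
      hE).aestronglyMeasurable)
    (fun y => Set.indicator_nonneg fun ω _ =>
      prod_nonneg fun k _ => by rw [natCast_mul_sub_one_eq_two_mul_choose]; positivity)
    (fun Y hY ω => by
      by_cases hω : ω ∈ E
      · simpa [hω, Set.indicator_of_mem, Set.inter_indicator_one] using
          sum_prod_localTime_le S n hY ω
      · simp [hω])
  rw [integral_const_mul, integral_finsetSum _ fun e _ => (integrable_const 1).indicator (hC e)]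
    at key
  simp_rw [integral_indicator_one (hC _)] at key
  rw [inv_pow, inv_mul_le_iff₀ (by positivity)]
  exact key

end EnergyMoments

theorem truncated_energy_moment_lower_bound_general
    {Ω : Type*} [MeasurableSpace Ω] (μ : Measure Ω) [IsProbabilityMeasure μ]
    (d : ℕ)
    (X : ℕ → Ω → (Fin d → ℤ)) (W : ℕ → Ω → ℝ)
    (hXmeas : ∀ i, Measurable (X i)) (hWmeas : ∀ i, Measurable (W i))
    (hWindep : iIndepFun W μ)
    (hWident : ∀ i, Measure.map (W i) μ = Measure.map (W 1) μ)
    (hWsymm : Measure.map (W 1) μ = Measure.map (fun ω => -(W 1 ω)) μ)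
    (hWmom : ∫ ω, (W 1 ω) ^ 2 ∂μ = 1)
    (hWexp : ∃ l0 > 0, Integrable (fun ω => Real.exp (l0 * (W 1 ω) ^ 2)) μ)
    (hXW : IndepFun (fun ω i => X i ω) (fun ω i => W i ω) μ)
    (S : ℕ → Ω → (Fin d → ℤ)) (hS : ∀ n ω, S n ω = ∑ i ∈ Finset.range n, X (i + 1) ω)
    (H : ℕ → Ω → ℝ)
    (hH : ∀ n ω, H n ω = ∑ j ∈ Finset.Icc 1 n, ∑ k ∈ Finset.Icc 1 n,
        if j < k ∧ S j ω = S k ω then W j ω * W k ω else 0)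
    (lt : ℕ → (Fin d → ℤ) → Ω → ℕ)
    (hlt : ∀ n x ω, lt n x ω = ((Finset.Icc 1 n).filter (fun k => S k ω = x)).card)
    (Ht : ℕ → ℝ → Ω → ℝ)
    (hHt : ∀ n K, Ht n K = Set.indicator {ω | ∀ x, (lt n x ω : ℝ) ≤ K} (H n))
    (A : ℕ → ℕ → ℝ → ℝ)
    (hA : ∀ m n K, A m n K = (2 : ℝ)⁻¹ ^ m * ∑' y : Fin m → (Fin d → ℤ),
      Set.indicator {y : Fin m → (Fin d → ℤ) | Function.Injective y}
        (fun y => ∫ ω, Set.indicator {ω' | ∀ x, (lt n x ω' : ℝ) ≤ K}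
          (fun ω' => ∏ k : Fin m, ((lt n (y k) ω' : ℝ) * ((lt n (y k) ω' : ℝ) - 1))) ω ∂μ) y) :
    ∀ m n : ℕ, 1 ≤ m → 1 ≤ n → ∀ K : ℝ, 0 < K →
      ((2 * m).factorial : ℝ) / (2 ^ (2 * m) * (m.factorial : ℝ)) * A m n K
        ≤ ∫ ω, (Ht n K ω) ^ (2 * m) ∂μ := by
  intro m n hm _ K _
  obtain rfl : lt = localTime S := funext fun n => funext fun x => funext fun ω => hlt n x ω
  have hξ : Measurable fun ω i => X i ω := measurable_pi_lambda _ hXmeas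
  have hSX := measurable_comap_of_eq_sum_range hS
  have hE := measurableSet_localTime_le hSX n K
  have hHn : H n = fun ω => ∑ p ∈ increasingPairs n,
      if S p.1 ω = S p.2 ω then W p.1 ω * W p.2 ω else 0 :=
    funext fun ω => (hH n ω).trans (sum_increasingPairs_eq (S · ω) (W · ω) n)
  have : NeZero m := ⟨by omega⟩
  obtain ⟨l, hl, hexp⟩ := hWexp
  have hlower := factorial_div_mul_sum_le_integral_pow (ι := Fin m) hξ.comap_le
    ((IndepFun_iff_Indep _ _ _).1 hXW) hWindep hWmeas
    (fun i => ⟨(hWmeas i).aemeasurable, (hWmeas 1).aemeasurable, hWident i⟩)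
    ⟨(hWmeas 1).aemeasurable, (hWmeas 1).neg.aemeasurable, hWsymm⟩ hWmom
    (integrable_pow_of_integrable_exp_mul_sq (hWmeas 1) hl hexp) hSX hE n
  have hupper := inv_two_pow_mul_tsum_integral_le (μ := μ) (ι := Fin m)
    (fun k => (hSX k).mono hξ.comap_le le_rfl) (hξ.comap_le _ hE) n
  rw [Fintype.card_fin] at hlower hupper
  rw [hHt, hHn, hA]
  refine ((mul_le_mul_of_nonneg_left hupper (by positivity)).trans
    (mul_le_mul_of_nonneg_right ?_ (sum_nonneg fun _ _ => measureReal_nonneg))).trans hlower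
  gcongr
  · exact one_le_two
  · omega

/-- **Lower bound on even moments of the truncated energy
(Proposition 2.1, inequality (2.8)):** `E[H̃_n^{2m}] ≥ ((2m)!/(2^{2m} m!)) A_m(n)`. -/
theorem truncated_energy_moment_lower_bound
    {Ω : Type*} [MeasurableSpace Ω] (μ : Measure Ω) [IsProbabilityMeasure μ]
    (d : ℕ) (hd : 1 ≤ d)
    (X : ℕ → Ω → (Fin d → ℤ)) (W : ℕ → Ω → ℝ)
    (hXmeas : ∀ i, Measurable (X i)) (hWmeas : ∀ i, Measurable (W i))
    (hXindep : iIndepFun X μ)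
    (hXident : ∀ i, Measure.map (X i) μ = Measure.map (X 1) μ)
    (hXsymm : Measure.map (X 1) μ = Measure.map (fun ω => -(X 1 ω)) μ)
    (hXsupp : AddSubgroup.closure {x : Fin d → ℤ | μ {ω | X 1 ω = x} ≠ 0} = ⊤)
    (hXmom : ∀ a b : Fin d, Integrable (fun ω => ((X 1 ω a : ℝ) * (X 1 ω b : ℝ))) μ)
    (hWindep : iIndepFun W μ)
    (hWident : ∀ i, Measure.map (W i) μ = Measure.map (W 1) μ)
    (hWsymm : Measure.map (W 1) μ = Measure.map (fun ω => -(W 1 ω)) μ)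
    (hWmom : ∫ ω, (W 1 ω) ^ 2 ∂μ = 1)
    (hWexp : ∃ l0 > 0, Integrable (fun ω => Real.exp (l0 * (W 1 ω) ^ 2)) μ)
    (hXW : IndepFun (fun ω i => X i ω) (fun ω i => W i ω) μ)
    (S : ℕ → Ω → (Fin d → ℤ)) (hS : ∀ n ω, S n ω = ∑ i ∈ Finset.range n, X (i + 1) ω)
    (H : ℕ → Ω → ℝ)
    (hH : ∀ n ω, H n ω = ∑ j ∈ Finset.Icc 1 n, ∑ k ∈ Finset.Icc 1 n,
        if j < k ∧ S j ω = S k ω then W j ω * W k ω else 0)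
    (lt : ℕ → (Fin d → ℤ) → Ω → ℕ)
    (hlt : ∀ n x ω, lt n x ω = ((Finset.Icc 1 n).filter (fun k => S k ω = x)).card)
    (Ht : ℕ → ℝ → Ω → ℝ)
    (hHt : ∀ n K, Ht n K = Set.indicator {ω | ∀ x, (lt n x ω : ℝ) ≤ K} (H n))
    (A : ℕ → ℕ → ℝ → ℝ)
    (hA : ∀ m n K, A m n K = (2 : ℝ)⁻¹ ^ m * ∑' y : Fin m → (Fin d → ℤ),
      Set.indicator {y : Fin m → (Fin d → ℤ) | Function.Injective y}
        (fun y => ∫ ω, Set.indicator {ω' | ∀ x, (lt n x ω' : ℝ) ≤ K}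
          (fun ω' => ∏ k : Fin m, ((lt n (y k) ω' : ℝ) * ((lt n (y k) ω' : ℝ) - 1))) ω ∂μ) y) :
    ∀ m n : ℕ, 1 ≤ m → 1 ≤ n → ∀ K : ℝ, 0 < K →
      ((2 * m).factorial : ℝ) / (2 ^ (2 * m) * (m.factorial : ℝ)) * A m n K
        ≤ ∫ ω, (Ht n K ω) ^ (2 * m) ∂μ :=
  truncated_energy_moment_lower_bound_general μ d X W hXmeas hWmeas hWindep hWident hWsymm hWmom
    hWexp hXW S hS H hH lt hlt Ht hHt A hA
end

section
/- For any s, t > 0 and any integer n ≥ 2, (min_{1≤k≤n} P{|H_k| ≤ s}) · P{max_{1≤l≤n} |H_l| ≥ s + t} ≤ 2 P{|H_n| ≥ t}. -/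
/-!
Lévy's reflection argument, with the reflection acting on the weights only. Decompose the event
`max_{l ≤ n} |H_l| ≥ s + t` according to the first time `l` at which `|H_l| ≥ s + t`. Write
`H_n = H_l + C_l + D_l`, where `D_l` is the energy of the path after time `l` and `C_l` collects
the interactions across time `l`. Reversing the signs of the weights `ω_k`, `k > l`, preserves
the law of the whole sequence, fixes `H_l` and `D_l`, and turns `C_l` into `-C_l`; so the
reflected energy `H_nʳ` satisfies `H_n + H_nʳ = 2 (H_l + D_l)`, and on `{|D_l| ≤ s}` one of
`|H_n|`, `|H_nʳ|` is at least `t`.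
Finally `D_l` is independent of the first-passage event and distributed as `H_{n-l}`, so
`P(|D_l| ≤ s) ≥ min_k P(|H_k| ≤ s)`; summing over `l` gives the inequality.
-/

open MeasureTheory ProbabilityTheory Finset
open scoped ENNReal

lemma le_abs_or_le_abs_of_add_eq {a b h d s t : ℝ} (hsum : a + b = 2 * (h + d))
    (hh : s + t ≤ |h|) (hd : |d| ≤ s) : t ≤ |a| ∨ t ≤ |b| := by
  by_contra! hlt
  have hab : 2 * |h + d| ≤ |a| + |b| := by simpa [hsum, abs_mul] using abs_add_le a b
  have hhd : |h| ≤ |h + d| + |d| := by simpa using abs_add_le (h + d) (-d)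
  linarith

lemma sum_Ioc_sum_Ioc_split {M : Type*} [AddCommMonoid M] (f : ℕ → ℕ → M) {a l n : ℕ}
    (hal : a ≤ l) (hln : l ≤ n) :
    ∑ j ∈ Ioc a n, ∑ k ∈ Ioc a n, f j k =
      (∑ j ∈ Ioc a l, ∑ k ∈ Ioc a l, f j k + ∑ j ∈ Ioc l n, ∑ k ∈ Ioc l n, f j k) +
      (∑ j ∈ Ioc a l, ∑ k ∈ Ioc l n, f j k + ∑ j ∈ Ioc l n, ∑ k ∈ Ioc a l, f j k) := by
  simp only [← sum_Ioc_consecutive _ hal hln, sum_add_distrib]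
  abel

section FirstExceed

variable {α ι : Type*} [LinearOrder ι]

def firstExceed (s : Finset ι) (f : ι → α → ℝ) (c : ℝ) (l : ι) : Set α :=
  {a | c ≤ f l a ∧ ∀ k ∈ s, k < l → f k a < c}

lemma firstExceed_congr {s : Finset ι} {f g : ι → α → ℝ} {l : ι} (h : ∀ k ≤ l, f k = g k)
    (c : ℝ) : firstExceed s f c l = firstExceed s g c l := by
  simp +contextual only [firstExceed, h l le_rfl, fun k (hk : k < l) => h k hk.le]

lemma setOf_le_sup'_eq_biUnion_firstExceed {s : Finset ι} (hs : s.Nonempty) (f : ι → α → ℝ)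
    (c : ℝ) : {a | c ≤ s.sup' hs (f · a)} = ⋃ l ∈ s, firstExceed s f c l := by
  ext a
  simp only [Set.mem_ofPred_eq, Set.mem_iUnion, le_sup'_iff, exists_prop]
  constructor
  · rintro ⟨k, hk, hck⟩
    have hne : (s.filter (c ≤ f · a)).Nonempty := ⟨k, mem_filter.2 ⟨hk, hck⟩⟩
    obtain ⟨hl, hcl⟩ := mem_filter.1 (min'_mem _ hne)
    refine ⟨_, hl, hcl, fun j hj hjl => lt_of_not_ge fun hcj => ?_⟩
    exact (min'_le _ j (mem_filter.2 ⟨hj, hcj⟩)).not_gt hjl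
  · rintro ⟨l, hl, hcl, -⟩
    exact ⟨l, hl, hcl⟩

lemma pairwiseDisjoint_firstExceed (s : Finset ι) (f : ι → α → ℝ) (c : ℝ) :
    (s : Set ι).PairwiseDisjoint (firstExceed s f c) := by
  have key : ∀ k ∈ s, ∀ l, k < l → Disjoint (firstExceed s f c k) (firstExceed s f c l) :=
    fun k hk l hkl => Set.disjoint_left.2 fun a hak hal => (hal.2 k hk hkl).not_ge hak.1
  intro k hk l hl hkl
  rcases hkl.lt_or_gt with h | h
  · exact key k hk l h
  · exact (key l hl k h).symm

lemma measurableSet_firstExceed {m : MeasurableSpace α} {s : Finset ι} {f : ι → α → ℝ} {l : ι}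
    (hf : ∀ k ≤ l, Measurable (f k)) (c : ℝ) : MeasurableSet (firstExceed s f c l) := by
  have : firstExceed s f c l = {a | c ≤ f l a} ∩ ⋂ k ∈ s.filter (· < l), {a | f k a < c} := by
    ext a
    simp [firstExceed]
  rw [this]
  exact (measurableSet_le measurable_const (hf l le_rfl)).inter <|
    .biInter (s.filter _).countable_toSet fun k hk =>
      measurableSet_lt (hf k (mem_filter.1 hk).2.le) measurable_const

end FirstExceed

lemma mul_measure_biUnion_le {Ω ι : Type*} {m : MeasurableSpace Ω} {μ : Measure Ω}
    {s : Finset ι} {A : ι → Set Ω} (hd : (s : Set ι).PairwiseDisjoint A)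
    (hA : ∀ i ∈ s, MeasurableSet (A i)) {a b : ℝ≥0∞} (G : Set Ω)
    (h : ∀ i ∈ s, a * μ (A i) ≤ b * μ (A i ∩ G)) : a * μ (⋃ i ∈ s, A i) ≤ b * μ G := by
  calc a * μ (⋃ i ∈ s, A i) = ∑ i ∈ s, a * μ (A i) := by
        rw [measure_biUnion_finset hd hA, mul_sum]
    _ ≤ ∑ i ∈ s, b * μ.restrict G (A i) := by
        refine sum_le_sum fun i hi => ?_
        rw [Measure.restrict_apply (hA i hi)]
        exact h i hi
    _ ≤ b * μ.restrict G Set.univ := by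
        rw [← mul_sum]
        gcongr
        exact sum_measure_le_measure_univ (fun i hi => (hA i hi).nullMeasurableSet)
          fun i hi j hj hij => (hd hi hj hij).aedisjoint
    _ = b * μ G := by rw [Measure.restrict_apply_univ]

lemma iIndepFun_prodMk {Ω ι E F : Type*} [MeasurableSpace Ω] {μ : Measure Ω}
    [MeasurableSpace E] [MeasurableSpace F] {X : ι → Ω → E} {W : ι → Ω → F}
    (hXm : ∀ i, Measurable (X i)) (hWm : ∀ i, Measurable (W i)) (hX : iIndepFun X μ)
    (hW : iIndepFun W μ) (hXW : IndepFun (fun ω i => X i ω) (fun ω i => W i ω) μ) :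
    iIndepFun (fun i ω => (X i ω, W i ω)) μ := by
  have := hX.isProbabilityMeasure
  refine iIndepFun_iff_finset.2 fun s => ?_
  refine (iIndepFun_iff_map_fun_eq_pi_map (f := fun (i : s) ω => (X i ω, W i ω))
    fun i => ((hXm i).prodMk (hWm i)).aemeasurable).2 ?_
  have hXWs : IndepFun (fun ω (i : s) => X i ω) (fun ω (i : s) => W i ω) μ :=
    hXW.comp (measurable_pi_lambda _ fun (i : s) => measurable_pi_apply i.1)
      (measurable_pi_lambda _ fun (i : s) => measurable_pi_apply i.1)
  have hpair : ∀ i, μ.map (fun ω => (X i ω, W i ω)) = (μ.map (X i)).prod (μ.map (W i)) :=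
    fun i => (hXW.comp (measurable_pi_apply i) (measurable_pi_apply i)).map_prod_eq_prod_map_map
      (hXm i).aemeasurable (hWm i).aemeasurable
  -- After transport to `(s → E) × (s → F)` both laws are products of two product measures.
  apply (MeasurableEquiv.arrowProdEquivProdArrow E F s).map_measurableEquiv_injective
  simp only [hpair]
  rw [(measurePreserving_arrowProdEquivProdArrow E F s _ _).map_eq,
    Measure.map_map (by fun_prop) (by fun_prop)]
  change μ.map (fun ω => ((fun (i : s) => X i ω), fun (i : s) => W i ω)) = _
  rw [hXWs.map_prod_eq_prod_map_map (by fun_prop) (by fun_prop),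
    (hX.restrict s).map_fun_eq_pi_map (fun (i : s) => (hXm i).aemeasurable),
    (hW.restrict s).map_fun_eq_pi_map (fun (i : s) => (hWm i).aemeasurable)]

lemma measure_inter_eq_mul_of_disjoint_iSup_comap {Ω ι β : Type*} {mΩ : MeasurableSpace Ω}
    {μ : Measure Ω} [MeasurableSpace β] {Y : ι → Ω → β} (hYm : ∀ i, Measurable (Y i))
    (hY : iIndepFun Y μ) {S T : Set ι} (hST : Disjoint S T) {A B : Set Ω}
    (hA : MeasurableSet[⨆ i ∈ S, MeasurableSpace.comap (Y i) ‹_›] A)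
    (hB : MeasurableSet[⨆ i ∈ T, MeasurableSpace.comap (Y i) ‹_›] B) :
    μ (A ∩ B) = μ A * μ B :=
  (Indep_iff _ _ μ).1 (indep_iSup_of_disjoint (fun i => (hYm i).comap_le)
    ((iIndepFun_iff_iIndep _ _ _).1 hY) hST) A B hA hB

lemma measurable_of_mem_iSup_comap {Ω ι β : Type*} [MeasurableSpace β] {Y : ι → Ω → β}
    {S : Set ι} {i : ι} (hi : i ∈ S) :
    Measurable[⨆ j ∈ S, MeasurableSpace.comap (Y j) ‹_›] (Y i) :=
  Measurable.of_comap_le (le_iSup₂ (f := fun j (_ : j ∈ S) => MeasurableSpace.comap (Y j) _) i hi)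

namespace PolymerEnergy

section Combinatorics

def shift {α : Type*} (l : ℕ) (p : ℕ → α) : ℕ → α := fun i => p (l + i)

variable {E : Type*}

def flipAfter (l : ℕ) (p : ℕ → E × ℝ) : ℕ → E × ℝ :=
  fun i => if l < i then ((p i).1, -(p i).2) else p i

variable [AddCancelCommMonoid E]

-- A path is coded by its increments and weights, `p i = (X_i, ω_i)`, so that `walk p k = S_k`;
-- the entry `p 0` is never used.
def walk (p : ℕ → E × ℝ) (k : ℕ) : E := ∑ i ∈ range k, (p (i + 1)).1

lemma walk_add (p : ℕ → E × ℝ) (l j : ℕ) : walk p (l + j) = walk p l + walk (shift l p) j :=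
  sum_range_add _ l j

lemma walk_flipAfter (l : ℕ) (p : ℕ → E × ℝ) : walk (flipAfter l p) = walk p := by
  funext k
  refine sum_congr rfl fun i _ => ?_
  unfold flipAfter
  split_ifs <;> rfl

variable [DecidableEq E]

def interaction (p : ℕ → E × ℝ) (j k : ℕ) : ℝ :=
  if j < k ∧ walk p j = walk p k then (p j).2 * (p k).2 else 0

def energy (m : ℕ) (p : ℕ → E × ℝ) : ℝ := ∑ j ∈ Icc 1 m, ∑ k ∈ Icc 1 m, interaction p j k

lemma energy_eq_sum_Ioc (m : ℕ) (p : ℕ → E × ℝ) :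
    energy m p = ∑ j ∈ Ioc 0 m, ∑ k ∈ Ioc 0 m, interaction p j k := by
  rw [energy, ← Icc_add_one_left_eq_Ioc, zero_add]

lemma interaction_shift (p : ℕ → E × ℝ) (l j k : ℕ) :
    interaction (shift l p) j k = interaction p (l + j) (l + k) := by
  simp only [interaction, walk_add, add_left_cancel_iff, add_lt_add_iff_left]
  rfl

lemma energy_shift {l n : ℕ} (hl : l ≤ n) (p : ℕ → E × ℝ) :
    energy (n - l) (shift l p) = ∑ j ∈ Ioc l n, ∑ k ∈ Ioc l n, interaction p j k := by
  have hIoc : Ioc l n = (Ioc 0 (n - l)).map (addLeftEmbedding l) := by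
    rw [map_add_left_Ioc, add_zero, Nat.add_sub_cancel' hl]
  simp only [energy_eq_sum_Ioc, hIoc, sum_map, addLeftEmbedding_apply, interaction_shift]

lemma interaction_flipAfter_of_le_of_le {l j k : ℕ} (hj : j ≤ l) (hk : k ≤ l)
    (p : ℕ → E × ℝ) : interaction (flipAfter l p) j k = interaction p j k := by
  simp only [interaction, walk_flipAfter, flipAfter, if_neg (not_lt.2 hj), if_neg (not_lt.2 hk)]

lemma interaction_flipAfter_of_lt_of_lt {l j k : ℕ} (hj : l < j) (hk : l < k)
    (p : ℕ → E × ℝ) : interaction (flipAfter l p) j k = interaction p j k := by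
  simp only [interaction, walk_flipAfter, flipAfter, if_pos hj, if_pos hk, neg_mul_neg]

lemma interaction_flipAfter_of_le_of_lt {l j k : ℕ} (hj : j ≤ l) (hk : l < k)
    (p : ℕ → E × ℝ) : interaction (flipAfter l p) j k = -interaction p j k := by
  simp only [interaction, walk_flipAfter, flipAfter, if_neg (not_lt.2 hj), if_pos hk, mul_neg]
  split_ifs <;> simp

lemma interaction_flipAfter_of_lt_of_le {l j k : ℕ} (hj : l < j) (hk : k ≤ l)
    (p : ℕ → E × ℝ) : interaction (flipAfter l p) j k = -interaction p j k := by
  simp only [interaction, walk_flipAfter, flipAfter, if_pos hj, if_neg (not_lt.2 hk), neg_mul]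
  split_ifs <;> simp

lemma energy_flipAfter_of_le {k l : ℕ} (hk : k ≤ l) (p : ℕ → E × ℝ) :
    energy k (flipAfter l p) = energy k p :=
  sum_congr rfl fun _ hi => sum_congr rfl fun _ hj =>
    interaction_flipAfter_of_le_of_le ((mem_Icc.1 hi).2.trans hk) ((mem_Icc.1 hj).2.trans hk) p

lemma energy_add_energy_flipAfter {l n : ℕ} (hl : l ≤ n) (p : ℕ → E × ℝ) :
    energy n p + energy n (flipAfter l p) = 2 * (energy l p + energy (n - l) (shift l p)) := by
  have hcross₁ : ∑ j ∈ Ioc 0 l, ∑ k ∈ Ioc l n,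
      (interaction p j k + interaction (flipAfter l p) j k) = 0 :=
    sum_eq_zero fun j hj => sum_eq_zero fun k hk => by
      rw [interaction_flipAfter_of_le_of_lt (mem_Ioc.1 hj).2 (mem_Ioc.1 hk).1, add_neg_cancel]
  have hcross₂ : ∑ j ∈ Ioc l n, ∑ k ∈ Ioc 0 l,
      (interaction p j k + interaction (flipAfter l p) j k) = 0 :=
    sum_eq_zero fun j hj => sum_eq_zero fun k hk => by
      rw [interaction_flipAfter_of_lt_of_le (mem_Ioc.1 hj).1 (mem_Ioc.1 hk).2, add_neg_cancel]
  simp only [energy_shift hl, energy_eq_sum_Ioc, ← sum_add_distrib]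
  rw [sum_Ioc_sum_Ioc_split _ (Nat.zero_le l) hl, hcross₁, hcross₂, add_zero, add_zero, mul_add]
  simp only [mul_sum]
  congr 1 <;> refine sum_congr rfl fun j hj => sum_congr rfl fun k hk => ?_ <;>
    rw [mem_Ioc] at hj hk
  · rw [interaction_flipAfter_of_le_of_le hj.2 hk.2, two_mul]
  · rw [interaction_flipAfter_of_lt_of_lt hj.1 hk.1, two_mul]

end Combinatorics

section LawInvariance

variable {Ω α E : Type*} [MeasurableSpace Ω] {μ : Measure Ω} [MeasurableSpace α] [MeasurableSpace E]

lemma identDistrib_shift {Z : Ω → ℕ → α} (hZ : iIndepFun (fun i ω => Z ω i) μ)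
    (hid : ∀ i j, IdentDistrib (fun ω => Z ω i) (fun ω => Z ω j) μ μ) (l : ℕ) :
    IdentDistrib Z (shift l ∘ Z) μ μ :=
  IdentDistrib.pi (fun i => hid i (l + i)) hZ (hZ.precomp (add_right_injective l))

lemma identDistrib_flipAfter {Z : Ω → ℕ → E × ℝ} (hZm : Measurable Z)
    (hZ : iIndepFun (fun i ω => Z ω i) μ)
    (hsymm : ∀ i, IdentDistrib (fun ω => Z ω i) (fun ω => ((Z ω i).1, -(Z ω i).2)) μ μ)
    (l : ℕ) : IdentDistrib Z (flipAfter l ∘ Z) μ μ := by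
  refine IdentDistrib.pi (fun i => ?_) hZ (hZ.comp (fun i q => if l < i then (q.1, -q.2) else q)
    fun i => ?_)
  · by_cases h : l < i
    · simpa [flipAfter, h] using hsymm i
    · simpa [flipAfter, h] using IdentDistrib.refl (measurable_pi_iff.1 hZm i).aemeasurable
  · by_cases h : l < i <;> simp only [h, if_true, if_false] <;> fun_prop

end LawInvariance

section Probability

variable {Ω E : Type*} [AddCancelCommMonoid E] [DecidableEq E] [MeasurableSpace E] [MeasurableEq E]
  [MeasurableAdd₂ E]

lemma measurable_energy {m : MeasurableSpace Ω} {Z : Ω → ℕ → E × ℝ} {k : ℕ}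
    (hZ : ∀ i ∈ Icc 1 k, Measurable fun ω => Z ω i) : Measurable fun ω => energy k (Z ω) := by
  have hwalk : ∀ j ≤ k, Measurable fun ω => walk (Z ω) j := fun j hj =>
    measurable_sum _ fun i hi => measurable_fst.comp (hZ (i + 1) (by grind))
  refine measurable_sum _ fun j hj => measurable_sum _ fun l hl => ?_
  rw [mem_Icc] at hj hl
  refine Measurable.ite ((MeasurableSet.const _).inter
    (measurableSet_eq_fun (hwalk j hj.2) (hwalk l hl.2))) ?_ measurable_const
  exact (measurable_snd.comp (hZ j (mem_Icc.2 hj))).mul (measurable_snd.comp (hZ l (mem_Icc.2 hl)))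

variable [MeasurableSpace Ω] {μ : Measure Ω} {Z : Ω → ℕ → E × ℝ}

lemma mul_measure_firstExceed_le (hZm : Measurable Z) (hZ : iIndepFun (fun i ω => Z ω i) μ)
    (hid : ∀ i j, IdentDistrib (fun ω => Z ω i) (fun ω => Z ω j) μ μ)
    (hsymm : ∀ i, IdentDistrib (fun ω => Z ω i) (fun ω => ((Z ω i).1, -(Z ω i).2)) μ μ)
    {n l : ℕ} (hl : l ∈ Icc 1 n) {s t : ℝ} {a : ℝ≥0∞}
    (ha : ∀ k ∈ Icc 1 n, a ≤ μ {ω | |energy k (Z ω)| ≤ s}) :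
    a * μ (firstExceed (Icc 1 n) (fun k ω => |energy k (Z ω)|) (s + t) l) ≤
      2 * μ (firstExceed (Icc 1 n) (fun k ω => |energy k (Z ω)|) (s + t) l ∩
        {ω | t ≤ |energy n (Z ω)|}) := by
  have hln : l ≤ n := (mem_Icc.1 hl).2
  have hmeas : ∀ k, Measurable fun p : ℕ → E × ℝ => |energy k p| := fun k =>
    (measurable_energy fun i _ => measurable_pi_apply i).abs
  set A := firstExceed (Icc 1 n) (fun k ω => |energy k (Z ω)|) (s + t) l
  set B := {ω | |energy (n - l) (shift l (Z ω))| ≤ s}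
  set G := {ω | t ≤ |energy n (Z ω)|}
  set G' := {ω | t ≤ |energy n (flipAfter l (Z ω))|}
  have haB : a ≤ μ B := by
    rcases hln.lt_or_eq with hlt | rfl
    · have := (identDistrib_shift hZ hid l).measure_mem_eq
        (measurableSet_le (hmeas (n - l)) (measurable_const (a := s)))
      exact (ha (n - l) (mem_Icc.2 ⟨by omega, by omega⟩)).trans_eq this
    · refine (ha l hl).trans (measure_mono fun ω hω => ?_)
      simpa [B, energy] using (abs_nonneg _).trans hω
  have hindep : μ (A ∩ B) = μ A * μ B := by
    refine measure_inter_eq_mul_of_disjoint_iSup_comap (fun i => measurable_pi_iff.1 hZm i)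
      hZ (Set.Iic_disjoint_Ioi (le_refl l)) ?_ ?_
    · refine measurableSet_firstExceed (fun k hk =>
        continuous_abs.measurable.comp (measurable_energy fun i hi => ?_)) _
      exact measurable_of_mem_iSup_comap (Y := fun i ω => Z ω i) (by grind)
    · refine measurableSet_le
        (continuous_abs.measurable.comp (measurable_energy fun i hi => ?_)) measurable_const
      exact measurable_of_mem_iSup_comap (Y := fun i ω => Z ω i) (by grind)
  have hflip : μ (A ∩ G') = μ (A ∩ G) := by
    have := (identDistrib_flipAfter hZm hZ hsymm l).measure_mem_eq
      ((measurableSet_firstExceed (s := Icc 1 n) (fun k _ => hmeas k) (s + t) (l := l)).inter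
        (measurableSet_le (measurable_const (a := t)) (hmeas n)))
    have hA : (flipAfter l ∘ Z) ⁻¹' firstExceed (Icc 1 n) (fun k p => |energy k p|) (s + t) l = A :=
      firstExceed_congr (f := fun k ω => |energy k (flipAfter l (Z ω))|)
        (fun k hk => funext fun ω => by rw [energy_flipAfter_of_le hk]) _
    rw [Set.preimage_inter, Set.preimage_inter, hA] at this
    exact this.symm
  have hcover : A ∩ B ⊆ (A ∩ G) ∪ (A ∩ G') := fun ω ⟨hA, hB⟩ =>
    (le_abs_or_le_abs_of_add_eq (energy_add_energy_flipAfter hln (Z ω)) hA.1 hB).imp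
      (⟨hA, ·⟩) (⟨hA, ·⟩)
  calc a * μ A ≤ μ B * μ A := by gcongr
    _ = μ (A ∩ B) := by rw [hindep, mul_comm]
    _ ≤ μ (A ∩ G) + μ (A ∩ G') := (measure_mono hcover).trans (measure_union_le _ _)
    _ = 2 * μ (A ∩ G) := by rw [hflip, two_mul]

theorem levy_maximal_inequality (hZm : Measurable Z)
    (hZ : iIndepFun (fun i ω => Z ω i) μ)
    (hid : ∀ i j, IdentDistrib (fun ω => Z ω i) (fun ω => Z ω j) μ μ)
    (hsymm : ∀ i, IdentDistrib (fun ω => Z ω i) (fun ω => ((Z ω i).1, -(Z ω i).2)) μ μ)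
    {n : ℕ} (hn : (Icc 1 n).Nonempty) (s t : ℝ) :
    (Icc 1 n).inf' hn (fun k => μ {ω | |energy k (Z ω)| ≤ s}) *
      μ {ω | s + t ≤ (Icc 1 n).sup' hn fun l => |energy l (Z ω)|} ≤
      2 * μ {ω | t ≤ |energy n (Z ω)|} := by
  rw [setOf_le_sup'_eq_biUnion_firstExceed hn (fun l ω => |energy l (Z ω)|)]
  refine mul_measure_biUnion_le (pairwiseDisjoint_firstExceed _ _ _)
    (fun l _ => measurableSet_firstExceed (fun k _ => ?_) _) _
    fun l hl => mul_measure_firstExceed_le hZm hZ hid hsymm hl fun k hk => inf'_le _ hk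
  exact continuous_abs.measurable.comp (measurable_energy fun i _ => measurable_pi_iff.1 hZm i)

end Probability

end PolymerEnergy

open PolymerEnergy

/-- **Lévy-type maximal inequality for the polymer energy (Lemma 4.1):**
for `s, t > 0` and `n ≥ 2`,
`(min_{1≤k≤n} P{|H_k| ≤ s}) · P{max_{1≤l≤n} |H_l| ≥ s + t} ≤ 2 P{|H_n| ≥ t}`. -/
theorem polymer_energy_levy_maximal_inequality
    {Ω : Type*} [MeasurableSpace Ω] (μ : Measure Ω) [IsProbabilityMeasure μ]
    (d : ℕ)
    (X : ℕ → Ω → (Fin d → ℤ)) (W : ℕ → Ω → ℝ)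
    (hXmeas : ∀ i, Measurable (X i)) (hWmeas : ∀ i, Measurable (W i))
    (hXindep : iIndepFun X μ)
    (hXident : ∀ i, Measure.map (X i) μ = Measure.map (X 1) μ)
    (hWindep : iIndepFun W μ)
    (hWident : ∀ i, Measure.map (W i) μ = Measure.map (W 1) μ)
    (hWsymm : Measure.map (W 1) μ = Measure.map (fun ω => -(W 1 ω)) μ)
    (hXW : IndepFun (fun ω i => X i ω) (fun ω i => W i ω) μ)
    (S : ℕ → Ω → (Fin d → ℤ)) (hS : ∀ n ω, S n ω = ∑ i ∈ Finset.range n, X (i + 1) ω)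
    (H : ℕ → Ω → ℝ)
    (hH : ∀ n ω, H n ω = ∑ j ∈ Finset.Icc 1 n, ∑ k ∈ Finset.Icc 1 n,
        if j < k ∧ S j ω = S k ω then W j ω * W k ω else 0)
    (s t : ℝ) (n : ℕ) (hn : 2 ≤ n) :
    ((Finset.Icc 1 n).inf' (Finset.nonempty_Icc.mpr (by omega))
        (fun k => μ {ω | |H k ω| ≤ s})) *
      μ {ω | s + t ≤ (Finset.Icc 1 n).sup' (Finset.nonempty_Icc.mpr (by omega))
        (fun l => |H l ω|)}
      ≤ 2 * μ {ω | t ≤ |H n ω|} := by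
  set Z : Ω → ℕ → (Fin d → ℤ) × ℝ := fun ω i => (X i ω, W i ω)
  have hHZ : H = fun k ω => energy k (Z ω) := by
    funext k ω
    simp only [hH, hS]
    rfl
  have hXWi : ∀ i, IndepFun (X i) (W i) μ := fun i =>
    hXW.comp (measurable_pi_apply i) (measurable_pi_apply i)
  have hXid : ∀ i j, IdentDistrib (X i) (X j) μ μ := fun i j =>
    ⟨(hXmeas i).aemeasurable, (hXmeas j).aemeasurable, by rw [hXident i, hXident j]⟩
  have hWid : ∀ i j, IdentDistrib (W i) (W j) μ μ := fun i j =>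
    ⟨(hWmeas i).aemeasurable, (hWmeas j).aemeasurable, by rw [hWident i, hWident j]⟩
  have hWneg : ∀ i, IdentDistrib (W i) (fun ω => -W i ω) μ μ := fun i =>
    (hWid i 1).trans <| .trans ⟨(hWmeas 1).aemeasurable, (hWmeas 1).neg.aemeasurable, hWsymm⟩
      ((hWid 1 i).comp measurable_neg)
  rw [hHZ]
  exact levy_maximal_inequality (measurable_pi_lambda _ fun i => (hXmeas i).prodMk (hWmeas i))
    (iIndepFun_prodMk hXmeas hWmeas hXindep hWindep hXW)
    (fun i j => (hXid i j).prodMk (hWid i j) (hXWi i) (hXWi j))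
    (fun i => (IdentDistrib.refl (hXmeas i).aemeasurable).prodMk (hWneg i) (hXWi i)
      ((hXWi i).comp measurable_id measurable_neg)) _ s t
end
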